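/- arXiv:1811.06116 — 4 statements merged into one kernel-verified Lean document; each statement's English description precedes it below -/
import Mathlib

section
/- Let X ⊂ W^{2n,1}(J) be a subset of W^{2n,1}(J) determined by linear boundary conditions such that whenever v ∈ X, the reflected function w(t) := v(2T − t) also belongs to X. Assume L̃ is nonresonant in X and let G[2T] denote the Green's function of (L̃, X). Then G[2T](t,s) = G[2T](2T − t, 2T − s) for all (t,s) ∈ J × J. -/
open MeasureTheory Set

/-- `u` belongs to the space `W^{m,1}([0,T])`: it is of class `C^{m-1}` on `[0,T]` and
its `(m-1)`-st derivative is absolutely continuous, expressed via the fundamental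
theorem of calculus with an integrable `m`-th derivative. -/
def MemW (m : ℕ) (T : ℝ) (u : ℝ → ℝ) : Prop :=
  (∀ k < m, ContinuousOn (iteratedDeriv k u) (Icc 0 T)) ∧
  IntervalIntegrable (iteratedDeriv m u) volume 0 T ∧
  ∀ t ∈ Icc 0 T,
    iteratedDeriv (m - 1) u t
      = iteratedDeriv (m - 1) u 0 + ∫ s in (0:ℝ)..t, iteratedDeriv m u s

/-- The `2n`-th order linear differential operator
`L u = u^{(2n)} + a_{2n-1} u^{(2n-1)} + ⋯ + a_1 u' + a_0 u`. -/
noncomputable def Lop (n : ℕ) (a : ℕ → ℝ → ℝ) (u : ℝ → ℝ) (t : ℝ) : ℝ :=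
  iteratedDeriv (2 * n) u t + ∑ k ∈ Finset.range (2 * n), a k t * iteratedDeriv k u t

/-- Neumann space on `[0,T]`. -/
def XN (n : ℕ) (T : ℝ) : Set (ℝ → ℝ) :=
  {u | MemW (2 * n) T u ∧ ∀ k < n,
    iteratedDeriv (2 * k + 1) u 0 = 0 ∧ iteratedDeriv (2 * k + 1) u T = 0}

/-- Dirichlet space on `[0,T]`. -/
def XD (n : ℕ) (T : ℝ) : Set (ℝ → ℝ) :=
  {u | MemW (2 * n) T u ∧ ∀ k < n,
    iteratedDeriv (2 * k) u 0 = 0 ∧ iteratedDeriv (2 * k) u T = 0}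

/-- Mixed space 1 on `[0,T]`. -/
def XM1 (n : ℕ) (T : ℝ) : Set (ℝ → ℝ) :=
  {u | MemW (2 * n) T u ∧ ∀ k < n,
    iteratedDeriv (2 * k + 1) u 0 = 0 ∧ iteratedDeriv (2 * k) u T = 0}

/-- Mixed space 2 on `[0,T]`. -/
def XM2 (n : ℕ) (T : ℝ) : Set (ℝ → ℝ) :=
  {u | MemW (2 * n) T u ∧ ∀ k < n,
    iteratedDeriv (2 * k) u 0 = 0 ∧ iteratedDeriv (2 * k + 1) u T = 0}

/-- Periodic space on `[0,T]`. -/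
def XP (n : ℕ) (T : ℝ) : Set (ℝ → ℝ) :=
  {u | MemW (2 * n) T u ∧ ∀ k < 2 * n, iteratedDeriv k u 0 = iteratedDeriv k u T}

/-- Antiperiodic space on `[0,T]`. -/
def XA (n : ℕ) (T : ℝ) : Set (ℝ → ℝ) :=
  {u | MemW (2 * n) T u ∧ ∀ k < 2 * n, iteratedDeriv k u 0 = -iteratedDeriv k u T}

/-- The operator `Lop n a` is nonresonant in `X`: the only solution in `X` of the
homogeneous equation (a.e. on `[0,T]`) is the trivial one. -/
def Nonresonant (n : ℕ) (a : ℕ → ℝ → ℝ) (T : ℝ) (X : Set (ℝ → ℝ)) : Prop :=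
  ∀ u ∈ X, (∀ᵐ t ∂volume, t ∈ Icc 0 T → Lop n a u t = 0) →
    ∀ t ∈ Icc 0 T, u t = 0

/-- `G` is the Green's function of `(Lop n a, X)` on `[0,T]`: it is continuous on the
square and, for every `σ ∈ L¹(0,T)`, `t ↦ ∫₀ᵀ G t s σ s ds` is the unique solution in
`X` of `L u = σ` a.e. on `[0,T]`. -/
def IsGreen (n : ℕ) (a : ℕ → ℝ → ℝ) (T : ℝ) (X : Set (ℝ → ℝ)) (G : ℝ → ℝ → ℝ) : Prop :=
  ContinuousOn (fun p : ℝ × ℝ => G p.1 p.2) (Icc 0 T ×ˢ Icc 0 T) ∧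
  ∀ σ : ℝ → ℝ, IntervalIntegrable σ volume 0 T →
    ((fun t => ∫ s in (0:ℝ)..T, G t s * σ s) ∈ X ∧
     (∀ᵐ t ∂volume, t ∈ Icc 0 T →
        Lop n a (fun t' => ∫ s in (0:ℝ)..T, G t' s * σ s) t = σ t) ∧
     ∀ v ∈ X, (∀ᵐ t ∂volume, t ∈ Icc 0 T → Lop n a v t = σ t) →
       ∀ t ∈ Icc 0 T, v t = ∫ s in (0:ℝ)..T, G t s * σ s)

/-- Coefficients of the extended operator `L̃` on `[0,2T]`: the even-order coefficients
are extended evenly about `t = T`, the odd-order ones oddly. -/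
noncomputable def tildeCoef (T : ℝ) (a : ℕ → ℝ → ℝ) : ℕ → ℝ → ℝ :=
  fun k t => if t ≤ T then a k t else (-1 : ℝ) ^ k * a k (2 * T - t)

/-- Coefficients of the reflected operator `Ľ`:
`Ľ u = u^{(2n)} + Σ (-1)^k a_k(T - t) u^{(k)}`. -/
noncomputable def checkCoef (T : ℝ) (a : ℕ → ℝ → ℝ) : ℕ → ℝ → ℝ :=
  fun k t => (-1 : ℝ) ^ k * a k (T - t)

/-- `u` is an eigenfunction of `Lop n a` in `X` associated to the eigenvalue `lam`:
`u ∈ X`, `u` is not identically zero on `[0,T]`, and `L u + lam u = 0` a.e. on `[0,T]`. -/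
def IsEigenfun (n : ℕ) (a : ℕ → ℝ → ℝ) (T : ℝ) (X : Set (ℝ → ℝ)) (lam : ℝ)
    (u : ℝ → ℝ) : Prop :=
  u ∈ X ∧ (∃ t ∈ Icc 0 T, u t ≠ 0) ∧
  ∀ᵐ t ∂volume, t ∈ Icc 0 T → Lop n a u t + lam * u t = 0

/-- The set of eigenvalues (the spectrum) of `Lop n a` in `X`. -/
def SpecSet (n : ℕ) (a : ℕ → ℝ → ℝ) (T : ℝ) (X : Set (ℝ → ℝ)) : Set ℝ :=
  {lam | ∃ u, IsEigenfun n a T X lam u}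

/-- `lam0` is the smallest eigenvalue of `Lop n a` in `X`, it is simple (its
eigenfunctions form a one-dimensional space), and it admits an eigenfunction which is
strictly positive on the interior of the interval. -/
def IsPrincipal (n : ℕ) (a : ℕ → ℝ → ℝ) (T : ℝ) (X : Set (ℝ → ℝ)) (lam0 : ℝ) : Prop :=
  lam0 ∈ SpecSet n a T X ∧
  (∀ mu ∈ SpecSet n a T X, lam0 ≤ mu) ∧
  (∀ u v, IsEigenfun n a T X lam0 u → IsEigenfun n a T X lam0 v →
      ∃ c : ℝ, ∀ t ∈ Icc 0 T, v t = c * u t) ∧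
  ∃ u, IsEigenfun n a T X lam0 u ∧ ∀ t ∈ Ioo 0 T, 0 < u t

/-!
Reflection `t ↦ 2T - t` multiplies the `k`-th derivative by `(-1)^k`, which is exactly the
parity of the coefficients of `L̃`; so if `u` solves `L̃ u = σ(2T - ·)` in `X`, then `u(2T - ·)`
solves `L̃ v = σ` in `X`. Uniqueness of that solution and a change of variables give
`∫ G(t,s) σ(s) ds = ∫ G(2T - t, 2T - s) σ(s) ds` for every `σ ∈ L¹`, and two continuous kernels
that integrate every `σ` alike agree (test against their difference).
-/

open intervalIntegral

lemma eqOn_of_forall_integral_mul_eq {f g : ℝ → ℝ} {a b : ℝ} (hab : a < b)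
    (hf : ContinuousOn f (Icc a b)) (hg : ContinuousOn g (Icc a b))
    (h : ∀ σ : ℝ → ℝ, IntervalIntegrable σ volume a b →
      ∫ x in a..b, f x * σ x = ∫ x in a..b, g x * σ x) :
    EqOn f g (Icc a b) := by
  intro c hc
  by_contra hne
  have hfg : ContinuousOn (fun x => f x - g x) (Icc a b) := hf.sub hg
  have hpos : 0 < ∫ x in a..b, (f x - g x) ^ 2 :=
    integral_pos hab (hfg.pow 2) (fun x _ => sq_nonneg _)
      ⟨c, hc, by positivity [sub_ne_zero.2 hne]⟩
  have hint {φ : ℝ → ℝ} (hφ : ContinuousOn φ (Icc a b)) : IntervalIntegrable φ volume a b :=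
    hφ.intervalIntegrable_of_Icc hab.le
  have hzero : ∫ x in a..b, (f x - g x) ^ 2 = 0 := calc
    _ = ∫ x in a..b, f x * (f x - g x) - g x * (f x - g x) := by simp only [sq, sub_mul]
    _ = (∫ x in a..b, f x * (f x - g x)) - ∫ x in a..b, g x * (f x - g x) :=
      integral_sub (hint (hf.mul hfg)) (hint (hg.mul hfg))
    _ = 0 := by rw [h _ (hint hfg), sub_self]
  exact hpos.ne' hzero

lemma tildeCoef_two_mul_sub (T : ℝ) (a : ℕ → ℝ → ℝ) (k : ℕ) {t : ℝ} (ht : t ≠ T) :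
    tildeCoef T a k (2 * T - t) = (-1 : ℝ) ^ k * tildeCoef T a k t := by
  unfold tildeCoef
  rcases ht.lt_or_gt with ht | ht
  · rw [if_neg (by linarith), if_pos ht.le, sub_sub_cancel]
  · rw [if_pos (by linarith), if_neg (by linarith), ← mul_assoc, ← pow_add, ← two_mul, pow_mul]
    norm_num

lemma Lop_tildeCoef_comp_two_mul_sub (n : ℕ) (T : ℝ) (a : ℕ → ℝ → ℝ) (u : ℝ → ℝ) {t : ℝ}
    (ht : t ≠ T) :
    Lop n (tildeCoef T a) (fun x => u (2 * T - x)) t = Lop n (tildeCoef T a) u (2 * T - t) := by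
  simp only [Lop, iteratedDeriv_comp_const_sub, smul_eq_mul, tildeCoef_two_mul_sub T a _ ht]
  congr 1
  · simp [pow_mul]
  · refine Finset.sum_congr rfl fun k _ => ?_
    rw [← mul_assoc, mul_comm _ ((-1 : ℝ) ^ k)]

lemma ae_Lop_tildeCoef_comp_two_mul_sub {n : ℕ} {T : ℝ} {a : ℕ → ℝ → ℝ} {u σ : ℝ → ℝ}
    (h : ∀ᵐ t ∂volume, t ∈ Icc 0 (2 * T) → Lop n (tildeCoef T a) u t = σ t) :
    ∀ᵐ t ∂volume, t ∈ Icc 0 (2 * T) →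
      Lop n (tildeCoef T a) (fun x => u (2 * T - x)) t = σ (2 * T - t) := by
  have h' := (Measure.measurePreserving_sub_left volume (2 * T)).quasiMeasurePreserving.ae h
  filter_upwards [h', Measure.ae_ne volume T] with t hLu htT ht
  rw [Lop_tildeCoef_comp_two_mul_sub n T a u htT]
  exact hLu ⟨by linarith [ht.2], by linarith [ht.1]⟩

lemma IsGreen.integral_mul_eq_integral_reflect_mul {n : ℕ} {T : ℝ} {a : ℕ → ℝ → ℝ}
    {X : Set (ℝ → ℝ)} {G : ℝ → ℝ → ℝ} (hG : IsGreen n (tildeCoef T a) (2 * T) X G)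
    (hXrefl : ∀ v ∈ X, (fun t => v (2 * T - t)) ∈ X) {σ : ℝ → ℝ}
    (hσ : IntervalIntegrable σ volume 0 (2 * T)) {t : ℝ} (ht : t ∈ Icc 0 (2 * T)) :
    ∫ s in 0..2 * T, G t s * σ s = ∫ s in 0..2 * T, G (2 * T - t) (2 * T - s) * σ s := by
  have hσr : IntervalIntegrable (fun s => σ (2 * T - s)) volume 0 (2 * T) := by
    simpa using (hσ.comp_sub_left (2 * T)).symm
  obtain ⟨hu, hLu, -⟩ := hG.2 _ hσr
  have hLur := ae_Lop_tildeCoef_comp_two_mul_sub hLu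
  simp only [sub_sub_cancel] at hLur
  rw [← (hG.2 σ hσ).2.2 _ (hXrefl _ hu) hLur t ht]
  simpa using integral_comp_sub_left (a := 0) (b := 2 * T)
    (fun s => G (2 * T - t) (2 * T - s) * σ s) (2 * T)

theorem green_symmetry_general (n : ℕ) (T : ℝ) (hT : 0 < T)
    (a : ℕ → ℝ → ℝ)
    (X : Set (ℝ → ℝ))
    (hXrefl : ∀ v ∈ X, (fun t => v (2 * T - t)) ∈ X)
    (G : ℝ → ℝ → ℝ)
    (hG : IsGreen n (tildeCoef T a) (2 * T) X G) :
    ∀ t ∈ Icc 0 (2 * T), ∀ s ∈ Icc 0 (2 * T),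
      G t s = G (2 * T - t) (2 * T - s) := by
  intro t ht
  have hreflect : MapsTo (fun s => 2 * T - s) (Icc 0 (2 * T)) (Icc 0 (2 * T)) :=
    fun s hs => ⟨by linarith [hs.2], by linarith [hs.1]⟩
  have hGt : ContinuousOn (G t) (Icc 0 (2 * T)) := hG.1.uncurry_left t ht
  have hGr : ContinuousOn (fun s => G (2 * T - t) (2 * T - s)) (Icc 0 (2 * T)) :=
    (hG.1.uncurry_left _ (hreflect ht)).comp (by fun_prop) hreflect
  exact eqOn_of_forall_integral_mul_eq (by positivity) hGt hGr
    fun σ hσ => hG.integral_mul_eq_integral_reflect_mul hXrefl hσ ht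

theorem green_symmetry (n : ℕ) (hn : 1 ≤ n) (T : ℝ) (hT : 0 < T)
    (a : ℕ → ℝ → ℝ) (ha : ∀ k < 2 * n, IntervalIntegrable (a k) volume 0 T)
    (X : Set (ℝ → ℝ))
    (hXW : ∀ u ∈ X, MemW (2 * n) (2 * T) u)
    (hXadd : ∀ u ∈ X, ∀ v ∈ X, u + v ∈ X)
    (hXsmul : ∀ c : ℝ, ∀ u ∈ X, c • u ∈ X)
    (hXrefl : ∀ v ∈ X, (fun t => v (2 * T - t)) ∈ X)
    (hres : Nonresonant n (tildeCoef T a) (2 * T) X)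
    (G : ℝ → ℝ → ℝ)
    (hG : IsGreen n (tildeCoef T a) (2 * T) X G) :
    ∀ t ∈ Icc 0 (2 * T), ∀ s ∈ Icc 0 (2 * T),
      G t s = G (2 * T - t) (2 * T - s) :=
  green_symmetry_general n T hT a X hXrefl G hG
end

section
/- Assume L is nonresonant in the Neumann space X_{N,T} with Green's function G_N[T], and L̃ is nonresonant in the periodic space X_{P,2T} with Green's function G_P[2T]. Then G_N[T](t,s) = G_P[2T](t,s) + G_P[2T](2T − t, s) for all (t,s) ∈ I × I. -/
open MeasureTheory Set

lemma myIteratedDeriv_comp_const_sub (k : ℕ) (f : ℝ → ℝ) (c : ℝ) (x : ℝ) :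
    iteratedDeriv k (fun t => f (c - t)) x = (-1 : ℝ) ^ k * iteratedDeriv k f (c - x) := by
  have h2 := iteratedDeriv_comp_neg k (fun z => f (c + z)) x
  beta_reduce at h2
  have h1 : (fun t : ℝ => f (c - t)) = fun t : ℝ => f (c + -t) := by
    funext t; rw [sub_eq_add_neg]
  rw [h1, h2, iteratedDeriv_comp_const_add]
  rw [smul_eq_mul, sub_eq_add_neg]

lemma my_ae_reflect {c : ℝ} {P : ℝ → Prop} (h : ∀ᵐ t : ℝ, P t) : ∀ᵐ t : ℝ, P (c - t) := by
  have h1 : MeasurePreserving (fun t : ℝ => c - t) volume volume := by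
    have h2 := (measurePreserving_add_left (volume : Measure ℝ) c).comp
      (Measure.measurePreserving_neg (volume : Measure ℝ))
    simpa [Function.comp_def, sub_eq_add_neg] using h2
  exact h1.quasiMeasurePreserving.ae h

lemma my_ae_ne (T : ℝ) : ∀ᵐ t : ℝ, t ≠ T := by
  rw [ae_iff]
  have : {t : ℝ | ¬ t ≠ T} = {T} := by ext t; simp
  rw [this]
  exact measure_singleton T

lemma tildeCoef_reflect (T : ℝ) (a : ℕ → ℝ → ℝ) (k : ℕ) {t : ℝ} (ht : t ≠ T) :
    tildeCoef T a k t * (-1 : ℝ) ^ k = tildeCoef T a k (2 * T - t) := by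
  rcases lt_or_gt_of_ne ht with h | h
  · have h1 : ¬ (2 * T - t ≤ T) := by linarith
    have h2 : 2 * T - (2 * T - t) = t := by ring
    simp only [tildeCoef, if_pos h.le, if_neg h1, h2]
    ring
  · have h1 : ¬ (t ≤ T) := not_le.2 h
    have h2 : 2 * T - t ≤ T := by linarith
    simp only [tildeCoef, if_neg h1, if_pos h2]
    have hsq : (-1 : ℝ) ^ k * (-1 : ℝ) ^ k = 1 := by rw [← mul_pow]; norm_num
    calc (-1 : ℝ) ^ k * a k (2 * T - t) * (-1) ^ k
        = ((-1 : ℝ) ^ k * (-1) ^ k) * a k (2 * T - t) := by ring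
      _ = a k (2 * T - t) := by rw [hsq, one_mul]

lemma reflect_solution (n : ℕ) (hn : 1 ≤ n) (T : ℝ) (hT : 0 < T) (a : ℕ → ℝ → ℝ)
    (u : ℝ → ℝ) (σ : ℝ → ℝ)
    (hu : u ∈ XP n (2 * T))
    (heq : ∀ᵐ t ∂volume, t ∈ Icc (0:ℝ) (2 * T) → Lop n (tildeCoef T a) u t = σ t) :
    (fun t => u (2 * T - t)) ∈ XP n (2 * T) ∧
    ∀ᵐ t ∂volume, t ∈ Icc (0:ℝ) (2 * T) →
      Lop n (tildeCoef T a) (fun t' => u (2 * T - t')) t = σ (2 * T - t) := by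
  obtain ⟨⟨hcont, hint, hftc⟩, hper⟩ := hu
  set w : ℝ → ℝ := fun t => u (2 * T - t) with hw
  have hD : ∀ (k : ℕ) (x : ℝ),
      iteratedDeriv k w x = (-1:ℝ)^k * iteratedDeriv k u (2*T - x) :=
    fun k x => myIteratedDeriv_comp_const_sub k u (2*T) x
  have hDfun : ∀ k, iteratedDeriv k w = fun x => (-1:ℝ)^k * iteratedDeriv k u (2*T - x) :=
    fun k => funext (hD k)
  have hmaps : MapsTo (fun x : ℝ => 2*T - x) (Icc (0:ℝ) (2*T)) (Icc (0:ℝ) (2*T)) := by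
    intro x hx
    show 2*T - x ∈ Icc (0:ℝ) (2*T)
    exact ⟨by linarith [hx.2], by linarith [hx.1]⟩
  have heven : ((-1:ℝ))^(2*n) = 1 := by rw [pow_mul]; norm_num
  have hodd : ((-1:ℝ))^(2*n-1) = -1 := (Nat.odd_iff.mpr (by omega)).neg_one_pow
  constructor
  · refine ⟨⟨?_, ?_, ?_⟩, ?_⟩
    · intro k hk
      rw [hDfun k]
      exact continuousOn_const.mul
        (((hcont k hk).comp ((continuous_const.sub continuous_id).continuousOn) hmaps))
    · rw [hDfun (2*n)]
      simp only [heven, one_mul]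
      have := (hint.comp_sub_left (2*T)).symm
      simpa using this
    · intro t ht
      rw [hDfun (2*n-1), hDfun (2*n)]
      simp only [heven, hodd, one_mul, neg_one_mul, sub_zero]
      rw [intervalIntegral.integral_comp_sub_left]
      simp only [sub_zero]
      have e1 := hftc (2*T) ⟨by linarith, le_refl _⟩
      have e2 := hftc (2*T - t) ⟨by linarith [ht.2], by linarith [ht.1]⟩
      have hsub1 : uIcc (0:ℝ) (2*T - t) ⊆ uIcc (0:ℝ) (2*T) := by
        apply uIcc_subset_uIcc
        · exact ⟨by rw [min_eq_left (by linarith)], by rw [max_eq_right (by linarith)]; linarith [ht.1]⟩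
        · exact ⟨by rw [min_eq_left (by linarith)]; linarith [ht.2], by rw [max_eq_right (by linarith)]; linarith [ht.1]⟩
      have hsub2 : uIcc (2*T - t) (2*T) ⊆ uIcc (0:ℝ) (2*T) := by
        apply uIcc_subset_uIcc
        · exact ⟨by rw [min_eq_left (by linarith)]; linarith [ht.2], by rw [max_eq_right (by linarith)]; linarith [ht.1]⟩
        · exact ⟨by rw [min_eq_left (by linarith)]; linarith, by rw [max_eq_right (by linarith)]⟩
      have hadj := intervalIntegral.integral_add_adjacent_intervals
        (hint.mono_set hsub1) (hint.mono_set hsub2)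
      linarith [e1, e2, hadj]
    · intro k hk
      rw [hD k 0, hD k (2*T)]
      rw [sub_zero, sub_self, hper k hk]
  · have h2 : ∀ᵐ t : ℝ, (2*T - t) ∈ Icc (0:ℝ) (2*T) →
        Lop n (tildeCoef T a) u (2*T - t) = σ (2*T - t) := my_ae_reflect heq
    filter_upwards [h2, my_ae_ne T] with t h2t hne htIcc
    have hrefl : 2*T - t ∈ Icc (0:ℝ) (2*T) := hmaps htIcc
    have h3 := h2t hrefl
    show Lop n (tildeCoef T a) w t = σ (2*T - t)
    simp only [Lop] at h3 ⊢
    rw [hD (2*n) t]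
    have hsum : ∑ k ∈ Finset.range (2*n), tildeCoef T a k t * iteratedDeriv k w t
        = ∑ k ∈ Finset.range (2*n), tildeCoef T a k (2*T - t) * iteratedDeriv k u (2*T - t) := by
      apply Finset.sum_congr rfl
      intro k _
      rw [hD k t, ← tildeCoef_reflect T a k hne]
      ring
    rw [hsum, heven, one_mul]
    exact h3

open Topology in
lemma eqOn_zero_of_integral_sq_zero {T : ℝ} (hT : 0 < T) {g : ℝ → ℝ}
    (hg : ContinuousOn g (Icc 0 T)) (hint : (∫ s in (0:ℝ)..T, g s * g s) = 0) :
    ∀ s ∈ Icc (0:ℝ) T, g s = 0 := by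
  have hgi : IntervalIntegrable (fun s => g s * g s) volume 0 T := by
    apply ContinuousOn.intervalIntegrable
    rw [uIcc_of_le hT.le]; exact hg.mul hg
  have hz := (intervalIntegral.integral_eq_zero_iff_of_le_of_nonneg_ae hT.le
    (ae_of_all _ (fun x => mul_self_nonneg (g x))) hgi).mp hint
  have hmeasz : volume.restrict (Ioc 0 T) {x : ℝ | ¬ g x * g x = 0} = 0 := by
    have := hz
    rw [Filter.EventuallyEq, ae_iff] at this
    simpa using this
  have hIoo : EqOn g 0 (Ioo 0 T) := by
    intro s hs
    by_contra hne
    have hct : ContinuousAt g s := hg.continuousAt (Icc_mem_nhds hs.1 hs.2)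
    have h3 : ∀ᶠ x in 𝓝 s, g x * g x ≠ 0 :=
      (hct.mul hct).eventually_ne (mul_ne_zero hne hne)
    have h4 : {x : ℝ | g x * g x ≠ 0} ∩ Ioo 0 T ∈ 𝓝 s :=
      Filter.inter_mem h3 (Ioo_mem_nhds hs.1 hs.2)
    obtain ⟨a', b', hs', hsub⟩ := mem_nhds_iff_exists_Ioo_subset.mp h4
    have hsub1 : Ioo a' b' ⊆ {x : ℝ | ¬ g x * g x = 0} := fun x hx => (hsub hx).1
    have hsub2 : Ioo a' b' ⊆ Ioc 0 T := fun x hx => Ioo_subset_Ioc_self (hsub hx).2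
    have hle : volume.restrict (Ioc 0 T) (Ioo a' b') = 0 :=
      le_antisymm (hmeasz ▸ measure_mono hsub1) zero_le
    rw [Measure.restrict_apply' measurableSet_Ioc, inter_eq_left.mpr hsub2,
      Real.volume_Ioo] at hle
    have : b' - a' ≤ 0 := by
      by_contra hba
      exact (ENNReal.ofReal_pos.mpr (by linarith)).ne' hle
    linarith [hs'.1, hs'.2]
  have hIcc : EqOn g 0 (Icc 0 T) := by
    apply hIoo.of_subset_closure hg continuousOn_const Ioo_subset_Icc_self
    rw [closure_Ioo hT.ne]
  intro s hs
  exact hIcc hs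



set_option maxHeartbeats 2000000 in
theorem green_neumann_periodic (n : ℕ) (hn : 1 ≤ n) (T : ℝ) (hT : 0 < T)
    (a : ℕ → ℝ → ℝ) (ha : ∀ k < 2 * n, IntervalIntegrable (a k) volume 0 T)
    (GN GP : ℝ → ℝ → ℝ)
    (hNres : Nonresonant n a T (XN n T))
    (hGN : IsGreen n a T (XN n T) GN)
    (hPres : Nonresonant n (tildeCoef T a) (2 * T) (XP n (2 * T)))
    (hGP : IsGreen n (tildeCoef T a) (2 * T) (XP n (2 * T)) GP) :
    ∀ t ∈ Icc 0 T, ∀ s ∈ Icc 0 T,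
      GN t s = GP t s + GP (2 * T - t) s := by
  have h2T : (0:ℝ) < 2 * T := by linarith
  have hIccsub : Icc (0:ℝ) T ⊆ Icc (0:ℝ) (2*T) := Icc_subset_Icc le_rfl (by linarith)
  have huIccsub : uIcc (0:ℝ) T ⊆ uIcc (0:ℝ) (2*T) := by
    rw [uIcc_of_le hT.le, uIcc_of_le h2T.le]; exact hIccsub
  obtain ⟨hGNc, hGNsol⟩ := hGN
  obtain ⟨hGPc, hGPsol⟩ := hGP
  have hGPslice : ∀ x ∈ Icc (0:ℝ) (2*T), ContinuousOn (fun r => GP x r) (Icc 0 (2*T)) := by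
    intro x hx
    exact hGPc.comp (Continuous.continuousOn (continuous_const.prodMk continuous_id))
      (fun r hr => mk_mem_prod hx hr)
  have hGNslice : ∀ x ∈ Icc (0:ℝ) T, ContinuousOn (fun r => GN x r) (Icc 0 T) := by
    intro x hx
    exact hGNc.comp (Continuous.continuousOn (continuous_const.prodMk continuous_id))
      (fun r hr => mk_mem_prod hx hr)
  -- KEY integral identity
  have key : ∀ σ : ℝ → ℝ, IntervalIntegrable σ volume 0 T → ∀ x ∈ Icc (0:ℝ) T,
      (∫ r in (0:ℝ)..T, GN x r * σ r)
        = ∫ r in (0:ℝ)..T, (GP x r + GP (2*T - x) r) * σ r := by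
    intro σ hσ x hx
    set σ₀ : ℝ → ℝ := fun r => if r ≤ T then σ r else 0 with hσ₀def
    have hσ₀ : IntervalIntegrable σ₀ volume 0 (2*T) := by
      have h1 : IntervalIntegrable σ₀ volume 0 T := by
        rw [intervalIntegrable_iff_integrableOn_Ioc_of_le hT.le] at hσ ⊢
        exact hσ.congr_fun (fun r hr => by simp [hσ₀def, hr.2]) measurableSet_Ioc
      have h2 : IntervalIntegrable σ₀ volume T (2*T) := by
        rw [intervalIntegrable_iff_integrableOn_Ioc_of_le (by linarith)]
        exact (integrableOn_zero (μ := volume) (s := Ioc T (2*T))).congr_fun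
          (fun r hr => by simp [hσ₀def, not_le.mpr hr.1]) measurableSet_Ioc
      exact h1.trans h2
    have hσ₀r : IntervalIntegrable (fun r => σ₀ (2*T - r)) volume 0 (2*T) := by
      have h1 := hσ₀.comp_sub_left (2*T)
      rw [sub_zero, sub_self] at h1
      exact h1.symm
    set σt : ℝ → ℝ := fun r => σ₀ r + σ₀ (2*T - r) with hσtdef
    have hσt : IntervalIntegrable σt volume 0 (2*T) := hσ₀.add hσ₀r
    obtain ⟨hU₀mem, hU₀eq, _⟩ := hGPsol σ₀ hσ₀
    obtain ⟨hUmem, hUeq, _⟩ := hGPsol σt hσt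
    obtain ⟨_, _, hWuniq⟩ := hGPsol (fun r => σ₀ (2*T - r)) hσ₀r
    set U₀ : ℝ → ℝ := fun y => ∫ r in (0:ℝ)..(2*T), GP y r * σ₀ r with hU₀def
    set U : ℝ → ℝ := fun y => ∫ r in (0:ℝ)..(2*T), GP y r * σt r with hUdef
    obtain ⟨hWmem, hWeq⟩ := reflect_solution n hn T hT a U₀ σ₀ hU₀mem hU₀eq
    have hWval : ∀ y ∈ Icc (0:ℝ) (2*T),
        U₀ (2*T - y) = ∫ r in (0:ℝ)..(2*T), GP y r * σ₀ (2*T - r) :=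
      fun y hy => hWuniq (fun z => U₀ (2*T - z)) hWmem hWeq y hy
    -- product integrability for slices
    have hprod : ∀ y ∈ Icc (0:ℝ) (2*T), ∀ τ : ℝ → ℝ, IntervalIntegrable τ volume 0 (2*T) →
        IntervalIntegrable (fun r => GP y r * τ r) volume 0 (2*T) := by
      intro y hy τ hτ
      exact hτ.continuousOn_mul (by rw [uIcc_of_le h2T.le]; exact hGPslice y hy)
    have hUsplit : ∀ y ∈ Icc (0:ℝ) (2*T), U y = U₀ y + U₀ (2*T - y) := by
      intro y hy
      have hi1 := hprod y hy σ₀ hσ₀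
      have hi2 := hprod y hy _ hσ₀r
      have hcongr : ∀ r ∈ uIcc (0:ℝ) (2*T),
          GP y r * σt r = GP y r * σ₀ r + GP y r * σ₀ (2*T - r) := by
        intro r _; rw [hσtdef]; ring
      calc U y = ∫ r in (0:ℝ)..(2*T), (GP y r * σ₀ r + GP y r * σ₀ (2*T - r)) :=
            intervalIntegral.integral_congr hcongr
        _ = (∫ r in (0:ℝ)..(2*T), GP y r * σ₀ r)
              + ∫ r in (0:ℝ)..(2*T), GP y r * σ₀ (2*T - r) :=
            intervalIntegral.integral_add hi1 hi2
        _ = U₀ y + U₀ (2*T - y) := by rw [hWval y hy]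
    have hUsym : ∀ y ∈ Icc (0:ℝ) (2*T), U (2*T - y) = U y := by
      intro y hy
      have hy' : 2*T - y ∈ Icc (0:ℝ) (2*T) := ⟨by linarith [hy.2], by linarith [hy.1]⟩
      rw [hUsplit _ hy', hUsplit _ hy, show 2*T - (2*T - y) = y by ring, add_comm]
    obtain ⟨⟨hUcont, hUint, hUftc⟩, hUper⟩ := hUmem
    -- symmetry of derivatives
    have hkey : ∀ k < 2*n, EqOn (iteratedDeriv k U)
        (fun z => (-1:ℝ)^k * iteratedDeriv k U (2*T - z)) (Icc 0 (2*T)) := by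
      intro k hk
      have hEq : EqOn U (fun z => U (2*T - z)) (Ioo 0 (2*T)) :=
        fun z hz => (hUsym z (Ioo_subset_Icc_self hz)).symm
      have h1 := hEq.iteratedDeriv_of_isOpen isOpen_Ioo k
      have h2 : EqOn (iteratedDeriv k U)
          (fun z => (-1:ℝ)^k * iteratedDeriv k U (2*T - z)) (Ioo 0 (2*T)) := by
        intro z hz; rw [h1 hz, myIteratedDeriv_comp_const_sub]
      apply h2.of_subset_closure (hUcont k hk) ?_ Ioo_subset_Icc_self
        (by rw [closure_Ioo (by linarith : (0:ℝ) ≠ 2*T)])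
      refine continuousOn_const.mul ((hUcont k hk).comp
        ((continuous_const.sub continuous_id).continuousOn) ?_)
      intro z hz
      show 2*T - z ∈ Icc (0:ℝ) (2*T)
      exact ⟨by linarith [hz.2], by linarith [hz.1]⟩
    -- U restricted is in XN
    have hUXN : U ∈ XN n T := by
      refine ⟨⟨fun k hk => (hUcont k hk).mono hIccsub,
        hUint.mono_set huIccsub, fun z hz => hUftc z (hIccsub hz)⟩, ?_⟩
      intro k hk
      have hk1 : 2*k+1 < 2*n := by omega
      have hoddk : ((-1:ℝ))^(2*k+1) = -1 := (Nat.odd_iff.mpr (by omega)).neg_one_pow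
      constructor
      · have h0 : iteratedDeriv (2*k+1) U 0
            = (-1:ℝ)^(2*k+1) * iteratedDeriv (2*k+1) U (2*T - 0) :=
          hkey _ hk1 (⟨le_rfl, by linarith⟩ : (0:ℝ) ∈ Icc (0:ℝ) (2*T))
        rw [hoddk, sub_zero, ← hUper _ hk1] at h0
        linarith [h0]
      · have h0 : iteratedDeriv (2*k+1) U T
            = (-1:ℝ)^(2*k+1) * iteratedDeriv (2*k+1) U (2*T - T) :=
          hkey _ hk1 (⟨hT.le, by linarith⟩ : T ∈ Icc (0:ℝ) (2*T))
        rw [hoddk, show 2*T - T = T by ring] at h0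
        linarith [h0]
    -- U satisfies L u = σ a.e. on [0,T]
    have haeU : ∀ᵐ z ∂volume, z ∈ Icc (0:ℝ) T → Lop n a U z = σ z := by
      filter_upwards [hUeq, my_ae_ne T] with z hz hne hzT
      have hz2 : z ∈ Icc (0:ℝ) (2*T) := hIccsub hzT
      have h1 := hz hz2
      have hzlt : z < T := lt_of_le_of_ne hzT.2 hne
      have hσtz : σt z = σ z := by
        show (if z ≤ T then σ z else 0) + (if 2*T - z ≤ T then σ (2*T - z) else 0) = σ z
        rw [if_pos hzT.2, if_neg (by linarith : ¬ (2*T - z ≤ T)), add_zero]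
      simp only [Lop] at h1 ⊢
      rw [← hσtz, ← h1]
      congr 1
      apply Finset.sum_congr rfl
      intro k _
      have hco : tildeCoef T a k z = a k z := by simp only [tildeCoef, if_pos hzT.2]
      rw [hco]
    obtain ⟨_, _, hGNuniq⟩ := hGNsol σ hσ
    have hUval : U x = ∫ r in (0:ℝ)..T, GN x r * σ r :=
      hGNuniq U hUXN haeU x hx
    -- reduce U₀ to an integral over [0,T]
    have hU₀red : ∀ y ∈ Icc (0:ℝ) (2*T), U₀ y = ∫ r in (0:ℝ)..T, GP y r * σ r := by
      intro y hy
      have hi := hprod y hy σ₀ hσ₀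
      have hi1 := hi.mono_set huIccsub
      have hsub2 : uIcc T (2*T) ⊆ uIcc (0:ℝ) (2*T) := by
        rw [uIcc_of_le h2T.le, uIcc_of_le (by linarith : T ≤ 2*T)]
        exact Icc_subset_Icc hT.le le_rfl
      have hi2 := hi.mono_set hsub2
      have hadj := intervalIntegral.integral_add_adjacent_intervals hi1 hi2
      have hzero : (∫ r in T..(2*T), GP y r * σ₀ r) = 0 := by
        have hcg : ∀ᵐ r ∂volume, r ∈ Set.uIoc T (2*T) → GP y r * σ₀ r = 0 := by
          apply ae_of_all
          intro r hr
          rw [uIoc_of_le (by linarith : T ≤ 2*T)] at hr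
          rw [hσ₀def]
          simp [not_le.mpr hr.1]
        rw [intervalIntegral.integral_congr_ae hcg, intervalIntegral.integral_zero]
      have hfirst : (∫ r in (0:ℝ)..T, GP y r * σ₀ r) = ∫ r in (0:ℝ)..T, GP y r * σ r := by
        apply intervalIntegral.integral_congr
        intro r hr
        rw [uIcc_of_le hT.le] at hr
        rw [hσ₀def]
        simp [hr.2]
      show (∫ r in (0:ℝ)..(2*T), GP y r * σ₀ r) = _
      rw [← hadj, hzero, add_zero, hfirst]
    -- conclude
    have hx2 : x ∈ Icc (0:ℝ) (2*T) := hIccsub hx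
    have hx2' : 2*T - x ∈ Icc (0:ℝ) (2*T) := ⟨by linarith [hx.2], by linarith [hx.1]⟩
    have hfinal : U x = ∫ r in (0:ℝ)..T, (GP x r + GP (2*T - x) r) * σ r := by
      rw [hUsplit x hx2, hU₀red x hx2, hU₀red _ hx2']
      have hj1 : IntervalIntegrable (fun r => GP x r * σ r) volume 0 T :=
        hσ.continuousOn_mul (by rw [uIcc_of_le hT.le]; exact (hGPslice x hx2).mono hIccsub)
      have hj2 : IntervalIntegrable (fun r => GP (2*T - x) r * σ r) volume 0 T :=
        hσ.continuousOn_mul (by rw [uIcc_of_le hT.le]; exact (hGPslice _ hx2').mono hIccsub)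
      rw [← intervalIntegral.integral_add hj1 hj2]
      apply intervalIntegral.integral_congr
      intro r _
      ring
    rw [← hUval, hfinal]
  -- Fundamental-lemma step
  intro t ht s hs
  have ht2 : t ∈ Icc (0:ℝ) (2*T) := hIccsub ht
  have ht2' : 2*T - t ∈ Icc (0:ℝ) (2*T) := ⟨by linarith [ht.2], by linarith [ht.1]⟩
  set g : ℝ → ℝ := fun r => GN t r - (GP t r + GP (2*T - t) r) with hgdef
  have hgc : ContinuousOn g (Icc 0 T) := by
    apply (hGNslice t ht).sub
    exact ((hGPslice t ht2).mono hIccsub).add ((hGPslice _ ht2').mono hIccsub)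
  have hgI : IntervalIntegrable g volume 0 T :=
    ContinuousOn.intervalIntegrable (by rw [uIcc_of_le hT.le]; exact hgc)
  have hk := key g hgI t ht
  have hi1 : IntervalIntegrable (fun r => GN t r * g r) volume 0 T :=
    hgI.continuousOn_mul (by rw [uIcc_of_le hT.le]; exact hGNslice t ht)
  have hi2 : IntervalIntegrable (fun r => (GP t r + GP (2*T - t) r) * g r) volume 0 T :=
    hgI.continuousOn_mul (by
      rw [uIcc_of_le hT.le]
      exact ((hGPslice t ht2).mono hIccsub).add ((hGPslice _ ht2').mono hIccsub))
  have hsq : (∫ r in (0:ℝ)..T, g r * g r) = 0 := by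
    have hcg : ∀ r ∈ uIcc (0:ℝ) T,
        g r * g r = GN t r * g r - (GP t r + GP (2*T - t) r) * g r := by
      intro r _
      rw [hgdef]
      ring
    rw [intervalIntegral.integral_congr hcg, intervalIntegral.integral_sub hi1 hi2, hk,
      sub_self]
  have := eqOn_zero_of_integral_sq_zero hT hgc hsq s hs
  rw [hgdef] at this
  have h0 : GN t s - (GP t s + GP (2*T - t) s) = 0 := this
  linarith [h0]
end

section
/- Assume L is nonresonant in the Dirichlet space X_{D,T} with Green's function G_D[T], and L̃ is nonresonant in the periodic space X_{P,2T} with Green's function G_P[2T]. Then G_D[T](t,s) = G_P[2T](t,s) − G_P[2T](2T − t, s) for all (t,s) ∈ I × I. -/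
open MeasureTheory Set

open Filter Topology

lemma itd_comp_const_sub (k : ℕ) (f : ℝ → ℝ) (c : ℝ) (x : ℝ) :
    iteratedDeriv k (fun y => f (c - y)) x = (-1 : ℝ) ^ k * iteratedDeriv k f (c - x) := by
  have h2 := iteratedDeriv_comp_neg k (fun z => f (c + z)) x
  simp only [← sub_eq_add_neg] at h2
  rw [h2, iteratedDeriv_comp_const_add, smul_eq_mul, sub_eq_add_neg]

lemma itd_neg' (k : ℕ) (f : ℝ → ℝ) (x : ℝ) :
    iteratedDeriv k (fun y => -f y) x = -iteratedDeriv k f x :=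
  iteratedDeriv_neg k f x

lemma memW_neg {m : ℕ} {b : ℝ} {u : ℝ → ℝ} (h : MemW m b u) : MemW m b (fun x => -u x) := by
  obtain ⟨h1, h2, h3⟩ := h
  have e : ∀ k, iteratedDeriv k (fun x => -u x) = fun x => -iteratedDeriv k u x :=
    fun k => funext fun x => itd_neg' k u x
  refine ⟨fun k hk => ?_, ?_, fun t ht => ?_⟩
  · rw [e k]; exact (h1 k hk).neg
  · rw [e m]; exact h2.neg
  · rw [e (m-1), e m]
    simp only [intervalIntegral.integral_neg]
    rw [h3 t ht]; ring

lemma memW_reflect {m : ℕ} (hm : 1 ≤ m) {b : ℝ} (hb : 0 ≤ b) {u : ℝ → ℝ} (h : MemW m b u) :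
    MemW m b (fun x => u (b - x)) := by
  obtain ⟨h1, h2, h3⟩ := h
  have e : ∀ k, iteratedDeriv k (fun x => u (b - x))
      = fun x => (-1 : ℝ) ^ k * iteratedDeriv k u (b - x) :=
    fun k => funext fun x => itd_comp_const_sub k u b x
  have hmap : ∀ t ∈ Icc (0:ℝ) b, b - t ∈ Icc (0:ℝ) b := by
    intro t ht; simp only [mem_Icc] at *; constructor <;> linarith [ht.1, ht.2]
  refine ⟨fun k hk => ?_, ?_, fun t ht => ?_⟩
  · rw [e k]
    exact continuousOn_const.mul ((h1 k hk).comp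
      (continuous_const.sub continuous_id).continuousOn hmap)
  · rw [e m]
    have := (h2.comp_sub_left b).symm
    simp only [sub_zero, sub_self] at this
    exact this.const_mul _
  · rw [e (m-1), e m]
    simp only [intervalIntegral.integral_const_mul]
    have hsub : (0:ℝ) ≤ b - t := by simp only [mem_Icc] at ht; linarith [ht.2]
    have hint : IntervalIntegrable (iteratedDeriv m u) volume 0 (b - t) := by
      apply h2.mono_set
      rw [uIcc_of_le hsub, uIcc_of_le hb]
      exact Icc_subset_Icc le_rfl (by simp only [mem_Icc] at ht; linarith [ht.1])
    have hchg : (∫ s in (0:ℝ)..t, iteratedDeriv m u (b - s))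
        = ∫ s in (b - t)..(b - 0), iteratedDeriv m u s :=
      intervalIntegral.integral_comp_sub_left _ b
    rw [hchg]
    have hI : (∫ s in (0:ℝ)..b, iteratedDeriv m u s)
        - (∫ s in (0:ℝ)..(b - t), iteratedDeriv m u s)
        = ∫ s in (b - t)..(b - 0), iteratedDeriv m u s := by
      rw [sub_zero]
      exact intervalIntegral.integral_interval_sub_left h2 hint
    have hfb : iteratedDeriv (m-1) u b
        = iteratedDeriv (m-1) u 0 + ∫ s in (0:ℝ)..b, iteratedDeriv m u s :=
      h3 b (by simp [mem_Icc, hb])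
    have hfbt : iteratedDeriv (m-1) u (b - t)
        = iteratedDeriv (m-1) u 0 + ∫ s in (0:ℝ)..(b - t), iteratedDeriv m u s :=
      h3 (b - t) (hmap t ht)
    have hpow : (-1 : ℝ) ^ m = -(-1 : ℝ) ^ (m - 1) := by
      conv_lhs => rw [← Nat.sub_add_cancel hm]
      rw [pow_succ]; ring
    rw [sub_zero] at *
    rw [hpow, hfbt, hfb]
    rw [← hI] at *
    ring

lemma XP_neg {n : ℕ} {b : ℝ} {u : ℝ → ℝ} (h : u ∈ XP n b) : (fun x => -u x) ∈ XP n b := by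
  obtain ⟨h1, h2⟩ := h
  refine ⟨memW_neg h1, fun k hk => ?_⟩
  rw [itd_neg' k u 0, itd_neg' k u b, h2 k hk]

lemma XP_reflect {n : ℕ} (hn : 1 ≤ n) {b : ℝ} (hb : 0 ≤ b) {u : ℝ → ℝ} (h : u ∈ XP n b) :
    (fun x => u (b - x)) ∈ XP n b := by
  obtain ⟨h1, h2⟩ := h
  refine ⟨memW_reflect (by omega) hb h1, fun k hk => ?_⟩
  rw [itd_comp_const_sub k u b 0, itd_comp_const_sub k u b b, sub_zero, sub_self, h2 k hk]

lemma lop_neg (n : ℕ) (A : ℕ → ℝ → ℝ) (u : ℝ → ℝ) (t : ℝ) :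
    Lop n A (fun x => -u x) t = -Lop n A u t := by
  unfold Lop
  rw [itd_neg']
  have : ∀ k ∈ Finset.range (2*n),
      A k t * iteratedDeriv k (fun x => -u x) t = -(A k t * iteratedDeriv k u t) := by
    intro k _; rw [itd_neg']; ring
  rw [Finset.sum_congr rfl this, Finset.sum_neg_distrib]
  ring

lemma tildeCoef_symm (T : ℝ) (a : ℕ → ℝ → ℝ) (k : ℕ) {t : ℝ} (ht : t ≠ T) :
    tildeCoef T a k t * (-1 : ℝ) ^ k = tildeCoef T a k (2*T - t) := by
  have hsq : ((-1:ℝ)^k) * ((-1:ℝ)^k) = 1 := by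
    rw [← pow_add, ← two_mul, pow_mul]; norm_num
  unfold tildeCoef
  rcases lt_or_gt_of_ne ht with h | h
  · rw [if_pos h.le, if_neg (by linarith), sub_sub_cancel]; ring
  · rw [if_neg (by push_neg; exact h), if_pos (by linarith)]
    calc (-1:ℝ)^k * a k (2*T - t) * (-1)^k
        = ((-1:ℝ)^k * (-1)^k) * a k (2*T - t) := by ring
      _ = a k (2*T - t) := by rw [hsq]; ring

lemma lop_reflect (n : ℕ) (T : ℝ) (a : ℕ → ℝ → ℝ) (u : ℝ → ℝ) {t : ℝ} (ht : t ≠ T) :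
    Lop n (tildeCoef T a) (fun x => u (2*T - x)) t = Lop n (tildeCoef T a) u (2*T - t) := by
  unfold Lop
  rw [itd_comp_const_sub]
  have hev : (-1:ℝ)^(2*n) = 1 := by rw [pow_mul]; norm_num
  rw [hev, one_mul]
  congr 1
  refine Finset.sum_congr rfl fun k _ => ?_
  rw [itd_comp_const_sub, ← tildeCoef_symm T a k ht]
  ring

lemma ae_reflect {c : ℝ} {P : ℝ → Prop} (h : ∀ᵐ t ∂(volume : Measure ℝ), P t) :
    ∀ᵐ t ∂(volume : Measure ℝ), P (c - t) :=
  (Measure.measurePreserving_sub_left volume c).quasiMeasurePreserving.ae h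

lemma ae_ne (T : ℝ) : ∀ᵐ (t : ℝ) ∂volume, t ≠ T := by
  simp [ae_iff, Set.setOf_eq_eq_singleton]

lemma vanish {b : ℝ} (hb : 0 < b) {f : ℝ → ℝ}
    (hc : ContinuousOn f (Icc 0 b))
    (h : ∀ σ : ℝ → ℝ, IntervalIntegrable σ volume 0 b → (∫ s in (0:ℝ)..b, f s * σ s) = 0) :
    ∀ x ∈ Icc (0:ℝ) b, f x = 0 := by
  have hcu : ContinuousOn f (uIcc 0 b) := by rw [uIcc_of_le hb.le]; exact hc
  have hfi : IntervalIntegrable f volume 0 b := hcu.intervalIntegrable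
  have hzero : (∫ s in (0:ℝ)..b, f s * f s) = 0 := h f hfi
  by_contra hcon
  push_neg at hcon
  obtain ⟨x, hx, hfx⟩ := hcon
  set g : ℝ → ℝ := fun s => f s * f s with hg
  have hgc : ContinuousOn g (Icc 0 b) := hc.mul hc
  have hgx : 0 < g x := mul_self_pos.mpr hfx
  have hgi : IntervalIntegrable g volume 0 b := hfi.mul_continuousOn
    (hc.mono (by rw [uIcc_of_le hb.le]))
  -- find a neighborhood where g > g x / 2
  have hcw : ContinuousWithinAt g (Icc 0 b) x := hgc.continuousWithinAt hx
  have hev : ∀ᶠ y in 𝓝[Icc 0 b] x, g y > g x / 2 :=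
    hcw.eventually_const_lt (by linarith)
  rw [eventually_nhdsWithin_iff] at hev
  obtain ⟨ε, hε, hball⟩ := Metric.eventually_nhds_iff.mp hev
  -- choose a subinterval [c,d] of Icc 0 b ∩ ball x ε
  obtain ⟨c, d, hcd, h0c, hdb, hsub⟩ :
      ∃ c d : ℝ, c < d ∧ 0 ≤ c ∧ d ≤ b ∧ Ioo c d ⊆ Icc 0 b ∩ Metric.ball x ε := by
    rcases lt_or_eq_of_le hx.2 with hxb | hxb
    · refine ⟨x, min b (x + ε), by simp [hxb, hε], hx.1, min_le_left _ _, fun y hy => ?_⟩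
      obtain ⟨hy1, hy2⟩ := hy
      have hyb : y < b := lt_of_lt_of_le hy2 (min_le_left _ _)
      have hyxe : y < x + ε := lt_of_lt_of_le hy2 (min_le_right _ _)
      refine ⟨⟨le_of_lt (lt_of_le_of_lt hx.1 hy1), hyb.le⟩, ?_⟩
      rw [Metric.mem_ball, Real.dist_eq, abs_lt]
      constructor <;> linarith
    · refine ⟨max 0 (x - ε), x, by rcases max_cases 0 (x - ε) with ⟨h1,h2⟩|⟨h1,h2⟩ <;>
        [skip; skip] <;> rw [h1] <;> first | (subst hxb; linarith) | linarith,
        le_max_left _ _, hxb ▸ le_rfl, fun y hy => ?_⟩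
      obtain ⟨hy1, hy2⟩ := hy
      have hy0 : 0 < y := lt_of_le_of_lt (le_max_left _ _) hy1
      have hyxe : x - ε < y := lt_of_le_of_lt (le_max_right _ _) hy1
      refine ⟨⟨hy0.le, le_of_lt (lt_of_lt_of_le hy2 (hxb ▸ hx.2))⟩, ?_⟩
      rw [Metric.mem_ball, Real.dist_eq, abs_lt]
      constructor <;> linarith
  have hcd' : Ioo c d ⊆ Icc 0 b := fun y hy => (hsub hy).1
  have hgicd : IntervalIntegrable g volume c d := hgi.mono_set
    (by rw [uIcc_of_le hcd.le, uIcc_of_le hb.le]; exact Icc_subset_Icc h0c hdb)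
  have hpos : 0 < ∫ s in c..d, g s := by
    apply intervalIntegral.intervalIntegral_pos_of_pos_on hgicd _ hcd
    intro y hy
    have := hball (hsub hy).2 (hsub hy).1
    linarith
  have hg0c : IntervalIntegrable g volume 0 c := hgi.mono_set
    (by rw [uIcc_of_le h0c, uIcc_of_le hb.le]; exact Icc_subset_Icc le_rfl (hcd.le.trans hdb))
  have hgdb : IntervalIntegrable g volume d b := hgi.mono_set
    (by rw [uIcc_of_le hdb, uIcc_of_le hb.le]; exact Icc_subset_Icc (h0c.trans hcd.le) le_rfl)
  have hsplit : (∫ s in (0:ℝ)..c, g s) + (∫ s in c..d, g s) + (∫ s in d..b, g s)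
      = ∫ s in (0:ℝ)..b, g s := by
    rw [intervalIntegral.integral_add_adjacent_intervals hg0c hgicd,
      intervalIntegral.integral_add_adjacent_intervals (hg0c.trans hgicd) hgdb]
  have hnn1 : 0 ≤ ∫ s in (0:ℝ)..c, g s :=
    intervalIntegral.integral_nonneg h0c (fun y _ => mul_self_nonneg _)
  have hnn2 : 0 ≤ ∫ s in d..b, g s :=
    intervalIntegral.integral_nonneg hdb (fun y _ => mul_self_nonneg _)
  have : (∫ s in (0:ℝ)..b, g s) = 0 := hzero
  linarith

noncomputable def tExt (T : ℝ) (σ : ℝ → ℝ) : ℝ → ℝ :=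
  fun s => if s ≤ T then σ s else -σ (2*T - s)

lemma tExt_anti (T : ℝ) (σ : ℝ → ℝ) {t : ℝ} (ht : t ≠ T) :
    tExt T σ (2*T - t) = -tExt T σ t := by
  unfold tExt
  rcases lt_or_gt_of_ne ht with h | h
  · rw [if_neg (by push_neg; linarith), if_pos h.le, sub_sub_cancel]
  · rw [if_pos (by linarith), if_neg (by push_neg; exact h), neg_neg]

lemma tExt_intable {T : ℝ} (hT : 0 < T) {σ : ℝ → ℝ}
    (hσ : IntervalIntegrable σ volume 0 T) :
    IntervalIntegrable (tExt T σ) volume 0 (2*T) := by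
  have h1 : IntervalIntegrable (tExt T σ) volume 0 T := by
    apply hσ.congr
    intro s hs
    rw [uIoc_of_le hT.le] at hs
    unfold tExt
    rw [if_pos hs.2]
  have h2 : IntervalIntegrable (tExt T σ) volume T (2*T) := by
    have hr : IntervalIntegrable (fun x => -σ (2*T - x)) volume T (2*T) := by
      have := (hσ.comp_sub_left (2*T)).symm
      simp only [sub_zero] at this
      have h2T : 2*T - T = T := by ring
      rw [h2T] at this
      exact this.neg
    apply hr.congr
    intro s hs
    rw [uIoc_of_le (by linarith)] at hs
    unfold tExt
    rw [if_neg (by push_neg; exact hs.1)]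
  exact h1.trans h2

/-- Core reflection lemma: if `u ∈ XP` solves `L̃ u = τ` a.e. on `[0,2T]`, then the
reflection `x ↦ u (2T - x)` is in `XP` and solves `L̃ v = τ(2T - ·)` a.e. -/
lemma reflected_solution {n : ℕ} (hn : 1 ≤ n) {T : ℝ} (hT : 0 < T) {a : ℕ → ℝ → ℝ}
    {u : ℝ → ℝ} {τ : ℝ → ℝ}
    (hu : u ∈ XP n (2*T))
    (hL : ∀ᵐ t ∂(volume : Measure ℝ), t ∈ Icc 0 (2*T) → Lop n (tildeCoef T a) u t = τ t) :
    (fun x => u (2*T - x)) ∈ XP n (2*T) ∧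
    (∀ᵐ t ∂(volume : Measure ℝ), t ∈ Icc 0 (2*T) →
      Lop n (tildeCoef T a) (fun x => u (2*T - x)) t = τ (2*T - t)) := by
  refine ⟨XP_reflect hn (by linarith) hu, ?_⟩
  have hLr : ∀ᵐ t ∂(volume : Measure ℝ),
      2*T - t ∈ Icc 0 (2*T) → Lop n (tildeCoef T a) u (2*T - t) = τ (2*T - t) :=
    ae_reflect hL
  filter_upwards [hLr, ae_ne T] with t h1 h2 ht
  have hmem : 2*T - t ∈ Icc (0:ℝ) (2*T) := by
    simp only [mem_Icc] at *; constructor <;> linarith [ht.1, ht.2]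
  rw [lop_reflect n T a u h2]
  exact h1 hmem

lemma green_slice_cont {b : ℝ} {G : ℝ → ℝ → ℝ}
    (hcont : ContinuousOn (fun p : ℝ × ℝ => G p.1 p.2) (Icc 0 b ×ˢ Icc 0 b))
    {x : ℝ} (hx : x ∈ Icc (0:ℝ) b) :
    ContinuousOn (fun s => G x s) (Icc 0 b) := by
  have hmk : ContinuousOn (fun s : ℝ => ((x, s) : ℝ × ℝ)) (Icc 0 b) :=
    (Continuous.prodMk_right x).continuousOn
  exact hcont.comp hmk (fun s hs => Set.mem_prod.mpr ⟨hx, hs⟩)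

lemma green_symm {n : ℕ} (hn : 1 ≤ n) {T : ℝ} (hT : 0 < T) {a : ℕ → ℝ → ℝ} {GP : ℝ → ℝ → ℝ}
    (hGP : IsGreen n (tildeCoef T a) (2*T) (XP n (2*T)) GP) :
    ∀ t ∈ Icc (0:ℝ) (2*T), ∀ s ∈ Icc (0:ℝ) (2*T), GP t s = GP (2*T - t) (2*T - s) := by
  obtain ⟨hcont, hsol⟩ := hGP
  have hmapR : ∀ y ∈ Icc (0:ℝ) (2*T), 2*T - y ∈ Icc (0:ℝ) (2*T) := by
    intro y hy; simp only [mem_Icc] at *; constructor <;> linarith [hy.1, hy.2]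
  -- key integral identity
  have key : ∀ σ : ℝ → ℝ, IntervalIntegrable σ volume 0 (2*T) → ∀ t ∈ Icc (0:ℝ) (2*T),
      (∫ s in (0:ℝ)..(2*T), GP t s * σ s)
        = ∫ s in (0:ℝ)..(2*T), GP (2*T - t) (2*T - s) * σ s := by
    intro σ hσ t ht
    obtain ⟨huXP, huL, -⟩ := hsol σ hσ
    have hτ' : IntervalIntegrable (fun s => σ (2*T - s)) volume 0 (2*T) := by
      have := (hσ.comp_sub_left (2*T)).symm
      simpa using this
    obtain ⟨hvXP, hvL⟩ := reflected_solution hn hT huXP huL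
    have huniq := (hsol (fun s => σ (2*T - s)) hτ').2.2
      (fun x => (fun t' => ∫ s in (0:ℝ)..(2*T), GP t' s * σ s) (2*T - x)) hvXP hvL
    set x : ℝ := 2*T - t with hxdef
    have hx : x ∈ Icc (0:ℝ) (2*T) := hmapR t ht
    have h1 := huniq x hx
    simp only [hxdef, sub_sub_cancel] at h1
    -- h1 : ∫ s, GP t s * σ s = ∫ s, GP (2T - t) s * σ (2T - s)
    rw [h1]
    have hF : (fun s => GP (2*T - t) s * σ (2*T - s))
        = fun s => (fun y => GP (2*T - t) (2*T - y) * σ y) (2*T - s) := by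
      funext s; simp [sub_sub_cancel]
    rw [hF, intervalIntegral.integral_comp_sub_left (fun y => GP (2*T - t) (2*T - y) * σ y) (2*T)]
    norm_num
    rw [hxdef]
  -- conclude pointwise by the vanishing lemma
  intro t ht s hs
  have hconts : ContinuousOn (fun s => GP t s - GP (2*T - t) (2*T - s)) (Icc 0 (2*T)) := by
    apply (green_slice_cont hcont ht).sub
    exact (green_slice_cont hcont (hmapR t ht)).comp
      (continuous_const.sub continuous_id).continuousOn hmapR
  have hzero : ∀ σ : ℝ → ℝ, IntervalIntegrable σ volume 0 (2*T) →
      (∫ y in (0:ℝ)..(2*T), (GP t y - GP (2*T - t) (2*T - y)) * σ y) = 0 := by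
    intro σ hσ
    have hi1 : IntervalIntegrable (fun y => GP t y * σ y) volume 0 (2*T) := by
      apply hσ.continuousOn_mul
      rw [uIcc_of_le (by linarith)]
      exact green_slice_cont hcont ht
    have hi2 : IntervalIntegrable (fun y => GP (2*T - t) (2*T - y) * σ y) volume 0 (2*T) := by
      apply hσ.continuousOn_mul
      rw [uIcc_of_le (by linarith)]
      exact (green_slice_cont hcont (hmapR t ht)).comp
        (continuous_const.sub continuous_id).continuousOn hmapR
    have : (∫ y in (0:ℝ)..(2*T), (GP t y - GP (2*T - t) (2*T - y)) * σ y)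
        = (∫ y in (0:ℝ)..(2*T), GP t y * σ y)
          - ∫ y in (0:ℝ)..(2*T), GP (2*T - t) (2*T - y) * σ y := by
      rw [← intervalIntegral.integral_sub hi1 hi2]
      congr 1; funext y; ring
    rw [this, key σ hσ t ht, sub_self]
  have := vanish (by linarith : (0:ℝ) < 2*T) hconts hzero s hs
  linarith [this]

theorem green_dirichlet_periodic (n : ℕ) (hn : 1 ≤ n) (T : ℝ) (hT : 0 < T)
    (a : ℕ → ℝ → ℝ) (ha : ∀ k < 2 * n, IntervalIntegrable (a k) volume 0 T)
    (GD GP : ℝ → ℝ → ℝ)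
    (hDres : Nonresonant n a T (XD n T))
    (hGD : IsGreen n a T (XD n T) GD)
    (hPres : Nonresonant n (tildeCoef T a) (2 * T) (XP n (2 * T)))
    (hGP : IsGreen n (tildeCoef T a) (2 * T) (XP n (2 * T)) GP) :
    ∀ t ∈ Icc 0 T, ∀ s ∈ Icc 0 T,
      GD t s = GP t s - GP (2 * T - t) s := by
  have hsymm := green_symm hn hT hGP
  obtain ⟨hPcont, hPsol⟩ := hGP
  obtain ⟨hDcont, hDsol⟩ := hGD
  intro t ht s hs
  have ht2 : t ∈ Icc (0:ℝ) (2*T) := ⟨ht.1, by linarith [ht.2]⟩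
  have hrt2 : 2*T - t ∈ Icc (0:ℝ) (2*T) := ⟨by linarith [ht.2], by linarith [ht.1]⟩
  -- continuity of relevant slices
  have hGPt : ContinuousOn (fun y => GP t y) (Icc 0 (2*T)) := green_slice_cont hPcont ht2
  have hGPrt : ContinuousOn (fun y => GP (2*T - t) y) (Icc 0 (2*T)) :=
    green_slice_cont hPcont hrt2
  have hIccTsub : Icc (0:ℝ) T ⊆ Icc (0:ℝ) (2*T) := Icc_subset_Icc le_rfl (by linarith)
  -- KEY integral identity
  have key : ∀ σ : ℝ → ℝ, IntervalIntegrable σ volume 0 T →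
      (∫ y in (0:ℝ)..T, GD t y * σ y)
        = (∫ y in (0:ℝ)..T, GP t y * σ y) - ∫ y in (0:ℝ)..T, GP (2*T - t) y * σ y := by
    intro σ hσ
    have hσ' : IntervalIntegrable (tExt T σ) volume 0 (2*T) := tExt_intable hT hσ
    obtain ⟨hwXP, hwL, hwUniq⟩ := hPsol (tExt T σ) hσ'
    set w : ℝ → ℝ := fun t' => ∫ y in (0:ℝ)..(2*T), GP t' y * tExt T σ y with hwdef
    -- Step 1: oddness of w about T
    obtain ⟨hwrXP, hwrL⟩ := reflected_solution hn hT hwXP hwL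
    have hw'XP : (fun x => -w (2*T - x)) ∈ XP n (2 * T) := XP_neg hwrXP
    have hw'L : ∀ᵐ x ∂(volume : Measure ℝ), x ∈ Icc 0 (2*T) →
        Lop n (tildeCoef T a) (fun x' => -w (2*T - x')) x = tExt T σ x := by
      filter_upwards [hwrL, ae_ne T] with x h1 h2 hx
      calc Lop n (tildeCoef T a) (fun x' => -w (2*T - x')) x
          = -Lop n (tildeCoef T a) (fun x' => w (2*T - x')) x :=
            lop_neg n (tildeCoef T a) (fun x' => w (2*T - x')) x
        _ = -tExt T σ (2*T - x) := by rw [h1 hx]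
        _ = tExt T σ x := by rw [tExt_anti T σ h2, neg_neg]
    have hOdd : ∀ x ∈ Icc (0:ℝ) (2*T), -w (2*T - x) = w x := by
      intro x hx
      exact hwUniq (fun x' => -w (2*T - x')) hw'XP hw'L x hx
    -- Step 2: iterated derivatives of even order vanish at 0 and T
    have hDerOdd : ∀ m : ℕ, (-1:ℝ)^m = 1 →
        ∀ x ∈ Ioo (0:ℝ) (2*T), iteratedDeriv m w x = -iteratedDeriv m w (2*T - x) := by
      intro m hm x hx
      have hnhds : Icc (0:ℝ) (2*T) ∈ 𝓝 x := Icc_mem_nhds hx.1 hx.2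
      have hevent : (fun x' => -w (2*T - x')) =ᶠ[𝓝 x] w := by
        filter_upwards [hnhds] with y hy
        exact hOdd y hy
      have e0 : iteratedDeriv m (fun x' => -w (2*T - x')) x = iteratedDeriv m w x :=
        hevent.iteratedDeriv_eq m
      have e1 : iteratedDeriv m (fun x' => -w (2*T - x')) x
          = -iteratedDeriv m (fun x' => w (2*T - x')) x :=
        itd_neg' m (fun x' => w (2*T - x')) x
      have e2 : iteratedDeriv m (fun x' => w (2*T - x')) x
          = (-1:ℝ)^m * iteratedDeriv m w (2*T - x) := itd_comp_const_sub m w (2*T) x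
      rw [e1, e2, hm, one_mul] at e0
      linarith [e0]
    have hBdry : ∀ k < n, iteratedDeriv (2*k) w 0 = 0 ∧ iteratedDeriv (2*k) w T = 0 := by
      intro k hk
      have hk2 : 2*k < 2*n := by omega
      have hm : (-1:ℝ)^(2*k) = 1 := by rw [pow_mul]; norm_num
      have hcf : ContinuousOn (iteratedDeriv (2*k) w) (Icc 0 (2*T)) := hwXP.1.1 (2*k) hk2
      have hT0 : iteratedDeriv (2*k) w T = 0 := by
        have := hDerOdd (2*k) hm T ⟨hT, by linarith⟩
        have h2TT : 2*T - T = T := by ring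
        rw [h2TT] at this
        linarith
      have hEqOn : Set.EqOn (iteratedDeriv (2*k) w)
          (fun x => -iteratedDeriv (2*k) w (2*T - x)) (Icc 0 (2*T)) := by
        apply Set.EqOn.of_subset_closure (t := Icc (0:ℝ) (2*T)) (s := Ioo (0:ℝ) (2*T))
          (fun x hx => hDerOdd (2*k) hm x hx) hcf _ Ioo_subset_Icc_self
          (by rw [closure_Ioo (by linarith : (0:ℝ) ≠ 2*T)])
        refine (hcf.comp (continuous_const.sub continuous_id).continuousOn ?_).neg
        intro y hy
        simp only [mem_Icc, id_eq, Pi.sub_apply] at hy ⊢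
        constructor <;> linarith [hy.1, hy.2]
      have h0 : iteratedDeriv (2*k) w 0 = -iteratedDeriv (2*k) w (2*T) := by
        have := hEqOn (Set.left_mem_Icc.mpr (by linarith))
        simpa using this
      have hper : iteratedDeriv (2*k) w 0 = iteratedDeriv (2*k) w (2*T) := hwXP.2 (2*k) hk2
      constructor
      · linarith
      · exact hT0
    -- Step 3: w ∈ XD n T
    have hwXD : w ∈ XD n T := by
      obtain ⟨⟨c1, c2, c3⟩, -⟩ := hwXP
      refine ⟨⟨fun k hk => (c1 k hk).mono hIccTsub, c2.mono_set ?_,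
        fun x hx => c3 x (hIccTsub hx)⟩, hBdry⟩
      rw [uIcc_of_le hT.le, uIcc_of_le (by linarith : (0:ℝ) ≤ 2*T)]
      exact hIccTsub
    -- Step 4: L w = σ a.e. on [0,T]
    have hwLD : ∀ᵐ x ∂(volume : Measure ℝ), x ∈ Icc 0 T → Lop n a w x = σ x := by
      filter_upwards [hwL] with x h1 hx
      have hx2 : x ∈ Icc (0:ℝ) (2*T) := hIccTsub hx
      have h2 := h1 hx2
      have hcoef : Lop n a w x = Lop n (tildeCoef T a) w x := by
        unfold Lop
        congr 1
        refine Finset.sum_congr rfl fun k _ => ?_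
        unfold tildeCoef
        rw [if_pos hx.2]
      have hσx : tExt T σ x = σ x := by unfold tExt; rw [if_pos hx.2]
      rw [hcoef, h2, hσx]
    -- Step 5: Dirichlet uniqueness
    have hDuniq := (hDsol σ hσ).2.2 w hwXD hwLD t ht
    -- hDuniq : w t = ∫ y in 0..T, GD t y * σ y
    rw [← hDuniq]
    -- Step 6: split the integral defining w t
    have hiA : IntervalIntegrable (fun y => GP t y * tExt T σ y) volume 0 (2*T) := by
      apply hσ'.continuousOn_mul
      rwa [uIcc_of_le (by linarith : (0:ℝ) ≤ 2*T)]
    have hi1 : IntervalIntegrable (fun y => GP t y * tExt T σ y) volume 0 T := by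
      apply hiA.mono_set
      rw [uIcc_of_le hT.le, uIcc_of_le (by linarith : (0:ℝ) ≤ 2*T)]
      exact hIccTsub
    have hi2 : IntervalIntegrable (fun y => GP t y * tExt T σ y) volume T (2*T) := by
      apply hiA.mono_set
      rw [uIcc_of_le (by linarith : T ≤ 2*T), uIcc_of_le (by linarith : (0:ℝ) ≤ 2*T)]
      exact Icc_subset_Icc hT.le le_rfl
    have hsplit : w t = (∫ y in (0:ℝ)..T, GP t y * tExt T σ y)
        + ∫ y in T..(2*T), GP t y * tExt T σ y :=
      (intervalIntegral.integral_add_adjacent_intervals hi1 hi2).symm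
    have hfirst : (∫ y in (0:ℝ)..T, GP t y * tExt T σ y) = ∫ y in (0:ℝ)..T, GP t y * σ y := by
      apply intervalIntegral.integral_congr
      intro y hy
      rw [uIcc_of_le hT.le] at hy
      simp only [tExt, if_pos hy.2]
    have hsecond : (∫ y in T..(2*T), GP t y * tExt T σ y)
        = -∫ y in (0:ℝ)..T, GP (2*T - t) y * σ y := by
      have hc1 : (∫ y in T..(2*T), GP t y * tExt T σ y)
          = ∫ y in T..(2*T), -((fun z => GP t (2*T - z) * σ z) (2*T - y)) := by
        apply intervalIntegral.integral_congr_ae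
        apply MeasureTheory.ae_of_all
        intro y hy
        rw [uIoc_of_le (by linarith : T ≤ 2*T)] at hy
        simp only [tExt, if_neg (not_le.mpr hy.1), sub_sub_cancel]
        ring
      rw [hc1, intervalIntegral.integral_neg,
        intervalIntegral.integral_comp_sub_left (fun z => GP t (2*T - z) * σ z) (2*T)]
      have hend : 2*T - 2*T = (0:ℝ) := by ring
      have hend2 : 2*T - T = T := by ring
      rw [hend, hend2]
      congr 1
      apply intervalIntegral.integral_congr
      intro y hy
      rw [uIcc_of_le hT.le] at hy
      have hy2 : 2*T - y ∈ Icc (0:ℝ) (2*T) := ⟨by linarith [hy.2], by linarith [hy.1]⟩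
      have := hsymm t ht2 (2*T - y) hy2
      rw [sub_sub_cancel] at this
      simp only [← this]
    rw [hsplit, hfirst, hsecond]
    ring
  -- Conclude by the vanishing lemma on [0, T]
  have hconts : ContinuousOn (fun y => GD t y - (GP t y - GP (2*T - t) y)) (Icc 0 T) := by
    apply (green_slice_cont hDcont ht).sub
    exact (hGPt.mono hIccTsub).sub (hGPrt.mono hIccTsub)
  have hzero : ∀ σ : ℝ → ℝ, IntervalIntegrable σ volume 0 T →
      (∫ y in (0:ℝ)..T, (GD t y - (GP t y - GP (2*T - t) y)) * σ y) = 0 := by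
    intro σ hσ
    have hj1 : IntervalIntegrable (fun y => GD t y * σ y) volume 0 T := by
      apply hσ.continuousOn_mul
      rw [uIcc_of_le hT.le]
      exact green_slice_cont hDcont ht
    have hj2 : IntervalIntegrable (fun y => (GP t y - GP (2*T - t) y) * σ y) volume 0 T := by
      apply hσ.continuousOn_mul
      rw [uIcc_of_le hT.le]
      exact (hGPt.mono hIccTsub).sub (hGPrt.mono hIccTsub)
    have hexp : (∫ y in (0:ℝ)..T, (GD t y - (GP t y - GP (2*T - t) y)) * σ y)
        = (∫ y in (0:ℝ)..T, GD t y * σ y)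
          - ∫ y in (0:ℝ)..T, (GP t y - GP (2*T - t) y) * σ y := by
      rw [← intervalIntegral.integral_sub hj1 hj2]
      congr 1; funext y; ring
    have hexp2 : (∫ y in (0:ℝ)..T, (GP t y - GP (2*T - t) y) * σ y)
        = (∫ y in (0:ℝ)..T, GP t y * σ y) - ∫ y in (0:ℝ)..T, GP (2*T - t) y * σ y := by
      have hj3 : IntervalIntegrable (fun y => GP t y * σ y) volume 0 T := by
        apply hσ.continuousOn_mul
        rw [uIcc_of_le hT.le]
        exact hGPt.mono hIccTsub
      have hj4 : IntervalIntegrable (fun y => GP (2*T - t) y * σ y) volume 0 T := by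
        apply hσ.continuousOn_mul
        rw [uIcc_of_le hT.le]
        exact hGPrt.mono hIccTsub
      rw [← intervalIntegral.integral_sub hj3 hj4]
      congr 1; funext y; ring
    rw [hexp, hexp2, key σ hσ]
    ring
  have := vanish hT hconts hzero s hs
  linarith [this]
end

section
/- Assume L is nonresonant in the mixed space X_{M1,T} with Green's function G_{M1}[T], and L̃ is nonresonant in the antiperiodic space X_{A,2T} with Green's function G_A[2T]. Then G_{M1}[T](t,s) = G_A[2T](t,s) − G_A[2T](2T − t, s) for all (t,s) ∈ I × I. -/
open MeasureTheory Set

open Topology Filter in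
lemma iterD_reflect (n : ℕ) (f : ℝ → ℝ) (c : ℝ) (x : ℝ) :
    iteratedDeriv n (fun t => f (c - t)) x = (-1 : ℝ) ^ n * iteratedDeriv n f (c - x) := by
  have h1 : (fun t : ℝ => f (c - t)) = (fun t : ℝ => (fun y : ℝ => f (c + y)) (-t)) := by
    funext t; simp [sub_eq_add_neg]
  calc iteratedDeriv n (fun t => f (c - t)) x
      = iteratedDeriv n (fun t : ℝ => (fun y : ℝ => f (c + y)) (-t)) x := by rw [h1]
    _ = (-1 : ℝ) ^ n • iteratedDeriv n (fun y : ℝ => f (c + y)) (-x) :=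
        iteratedDeriv_comp_neg n (fun y : ℝ => f (c + y)) x
    _ = (-1 : ℝ) ^ n * iteratedDeriv n f (c - x) := by
        rw [iteratedDeriv_comp_const_add]; simp [sub_eq_add_neg, smul_eq_mul]

lemma iterD_reflect' (n : ℕ) (f : ℝ → ℝ) (c : ℝ) :
    iteratedDeriv n (fun t => f (c - t)) = fun x => (-1 : ℝ) ^ n * iteratedDeriv n f (c - x) :=
  funext fun x => iterD_reflect n f c x

lemma iterD_neg' (n : ℕ) (f : ℝ → ℝ) :
    iteratedDeriv n (fun t => -(f t)) = fun x => -(iteratedDeriv n f x) :=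
  funext fun x => iteratedDeriv_neg n f x

open Topology Filter in
lemma eqOn_Icc_of_eqOn_Ioo {f g : ℝ → ℝ} {a b : ℝ} (hab : a < b)
    (hf : ContinuousOn f (Icc a b)) (hg : ContinuousOn g (Icc a b))
    (h : EqOn f g (Ioo a b)) : EqOn f g (Icc a b) := by
  intro x hx
  have hxcl : x ∈ closure (Ioo a b) := by
    rw [closure_Ioo hab.ne]; exact hx
  have hne : (𝓝[Ioo a b] x).NeBot := mem_closure_iff_nhdsWithin_neBot.mp hxcl
  have h1 : Tendsto f (𝓝[Ioo a b] x) (𝓝 (f x)) :=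
    (hf x hx).mono Ioo_subset_Icc_self
  have h2 : Tendsto g (𝓝[Ioo a b] x) (𝓝 (g x)) :=
    (hg x hx).mono Ioo_subset_Icc_self
  have h1' : Tendsto g (𝓝[Ioo a b] x) (𝓝 (f x)) := by
    refine h1.congr' ?_
    filter_upwards [self_mem_nhdsWithin] with y hy using h hy
  exact tendsto_nhds_unique h1' h2

open Filter in
lemma eq_zero_of_integral_sq {a b : ℝ} (hab : a < b) {F : ℝ → ℝ}
    (hF : ContinuousOn F (Icc a b))
    (h : (∫ s in a..b, F s * F s) = 0) : ∀ s ∈ Icc a b, F s = 0 := by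
  have hFF : ContinuousOn (fun s => F s * F s) (Icc a b) := hF.mul hF
  have hint : IntervalIntegrable (fun s => F s * F s) volume a b := by
    apply ContinuousOn.intervalIntegrable
    rwa [uIcc_of_le hab.le]
  have h0 : (fun s => F s * F s) =ᵐ[volume.restrict (Ioc a b)] 0 := by
    exact (intervalIntegral.integral_eq_zero_iff_of_le_of_nonneg_ae hab.le
      (Eventually.of_forall fun x => mul_self_nonneg (F x)) hint).mp h
  have h0' : (fun s => F s * F s) =ᵐ[volume.restrict (Icc a b)] 0 := by
    rwa [Measure.restrict_congr_set Ioc_ae_eq_Icc] at h0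
  have hEq := Measure.eqOn_of_ae_eq h0' hFF continuousOn_const
    (by rw [interior_Icc, closure_Ioo hab.ne])
  intro s hs
  have h2 := hEq hs
  simpa [mul_self_eq_zero] using h2

lemma reflect_XA (n : ℕ) (hn : 1 ≤ n) (T : ℝ) (hT : 0 < T) (a : ℕ → ℝ → ℝ)
    (u : ℝ → ℝ) (τ : ℝ → ℝ) (hu : u ∈ XA n (2 * T))
    (hsol : ∀ᵐ t ∂volume, t ∈ Icc 0 (2 * T) → Lop n (tildeCoef T a) u t = τ t) :
    (fun x => u (2 * T - x)) ∈ XA n (2 * T) ∧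
      ∀ᵐ t ∂volume, t ∈ Icc 0 (2 * T) →
        Lop n (tildeCoef T a) (fun x => u (2 * T - x)) t = τ (2 * T - t) := by
  obtain ⟨⟨hcont, hii, hftc⟩, hbc⟩ := hu
  have heven : ((-1 : ℝ)) ^ (2 * n) = 1 := Even.neg_one_pow (even_two_mul n)
  have hodd : ((-1 : ℝ)) ^ (2 * n - 1) = -1 := Odd.neg_one_pow ⟨n - 1, by omega⟩
  have hrefmem : ∀ x ∈ Icc (0:ℝ) (2*T), 2*T - x ∈ Icc (0:ℝ) (2*T) := by
    intro x hx
    simp only [mem_Icc] at hx ⊢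
    constructor <;> linarith [hx.1, hx.2]
  have hsub : ∀ c d : ℝ, 0 ≤ c → d ≤ 2*T → c ≤ d →
      IntervalIntegrable (iteratedDeriv (2*n) u) volume c d := by
    intro c d h1 h2 h3
    refine hii.mono_set ?_
    rw [uIcc_of_le h3, uIcc_of_le (by linarith : (0:ℝ) ≤ 2*T)]
    exact Icc_subset_Icc h1 h2
  constructor
  · refine ⟨⟨?_, ?_, ?_⟩, ?_⟩
    · intro k hk
      rw [iterD_reflect']
      refine continuousOn_const.mul ((hcont k hk).comp ?_ hrefmem)
      exact (continuous_const.sub continuous_id).continuousOn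
    · rw [iterD_reflect']
      have base := (hii.comp_sub_left (2*T)).symm
      rw [sub_self, sub_zero] at base
      exact base.const_mul _
    · intro t ht
      simp only [mem_Icc] at ht
      rw [iterD_reflect', iterD_reflect']
      simp only [sub_zero]
      have key : ∫ s in (0:ℝ)..t, (-1:ℝ)^(2*n) * iteratedDeriv (2*n) u (2*T - s)
          = ∫ x in (2*T - t)..(2*T), iteratedDeriv (2*n) u x := by
        rw [intervalIntegral.integral_const_mul, heven, one_mul]
        have h := intervalIntegral.integral_comp_sub_left
          (a := (0:ℝ)) (b := t) (iteratedDeriv (2*n) u) (2*T)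
        rw [sub_zero] at h
        exact h
      rw [key, hodd]
      have h1 := hftc (2*T - t) ⟨by linarith, by linarith⟩
      have h2 := hftc (2*T) ⟨by linarith, le_refl _⟩
      have hadd := intervalIntegral.integral_add_adjacent_intervals
        (hsub 0 (2*T - t) (by linarith) (by linarith) (by linarith))
        (hsub (2*T - t) (2*T) (by linarith) (le_refl _) (by linarith))
      linarith [h1, h2, hadd]
    · intro k hk
      have e0 : iteratedDeriv k (fun x => u (2*T - x)) 0
          = (-1:ℝ)^k * iteratedDeriv k u (2*T) := by
        rw [iterD_reflect]; norm_num
      have e1 : iteratedDeriv k (fun x => u (2*T - x)) (2*T)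
          = (-1:ℝ)^k * iteratedDeriv k u 0 := by
        rw [iterD_reflect]; norm_num
      rw [e0, e1, hbc k hk]; ring
  · have hae1 : ∀ᵐ (t:ℝ) ∂volume, ((2*T - t) ∈ Icc 0 (2*T) →
        Lop n (tildeCoef T a) u (2*T - t) = τ (2*T - t)) :=
      (Measure.measurePreserving_sub_left volume (2*T)).quasiMeasurePreserving.ae hsol
    have hae2 : ∀ᵐ (t:ℝ) ∂volume, t ∈ ({T} : Set ℝ)ᶜ :=
      compl_mem_ae_iff.mpr (measure_singleton T)
    filter_upwards [hae1, hae2] with t h1 h2 ht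
    have hL := h1 (hrefmem t ht)
    have hneg2 : ∀ k : ℕ, (-1:ℝ)^k * (-1:ℝ)^k = 1 := by
      intro k; rw [← pow_add]; exact Even.neg_one_pow ⟨k, rfl⟩
    have hcoef : ∀ k : ℕ, tildeCoef T a k t * (-1:ℝ)^k = tildeCoef T a k (2*T - t) := by
      intro k
      have hne : t ≠ T := by simpa using h2
      by_cases htT : t ≤ T
      · have htT' : t < T := lt_of_le_of_ne htT hne
        have hnot : ¬ (2*T - t ≤ T) := by intro hc; linarith
        have harg : 2*T - (2*T - t) = t := by ring
        simp only [tildeCoef, if_pos htT, if_neg hnot, harg]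
        ring
      · have hle : 2*T - t ≤ T := by push_neg at htT; linarith
        simp only [tildeCoef, if_neg htT, if_pos hle]
        calc (-1:ℝ)^k * a k (2*T - t) * (-1:ℝ)^k
            = ((-1:ℝ)^k * (-1:ℝ)^k) * a k (2*T - t) := by ring
          _ = a k (2*T - t) := by rw [hneg2 k, one_mul]
    simp only [Lop] at hL ⊢
    rw [← hL]
    congr 1
    · rw [iterD_reflect, heven, one_mul]
    · refine Finset.sum_congr rfl ?_
      intro k _
      rw [iterD_reflect, ← hcoef k]
      ring

lemma neg_XA (n : ℕ) (c : ℝ) (u : ℝ → ℝ) (hu : u ∈ XA n c) : (fun t => -(u t)) ∈ XA n c := by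
  obtain ⟨⟨hcont, hii, hftc⟩, hbc⟩ := hu
  refine ⟨⟨?_, ?_, ?_⟩, ?_⟩
  · intro k hk; rw [iterD_neg']; exact (hcont k hk).neg
  · rw [iterD_neg']; exact hii.neg
  · intro t ht
    have h := hftc t ht
    simp only [iterD_neg', intervalIntegral.integral_neg]
    linarith
  · intro k hk
    have h := hbc k hk
    simp only [iterD_neg']
    linarith

lemma Lop_neg (n : ℕ) (a : ℕ → ℝ → ℝ) (u : ℝ → ℝ) (t : ℝ) :
    Lop n a (fun x => -(u x)) t = -(Lop n a u t) := by
  simp only [Lop, iterD_neg', mul_neg]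
  rw [Finset.sum_neg_distrib]
  ring

theorem green_mixed1_antiperiodic (n : ℕ) (hn : 1 ≤ n) (T : ℝ) (hT : 0 < T)
    (a : ℕ → ℝ → ℝ) (ha : ∀ k < 2 * n, IntervalIntegrable (a k) volume 0 T)
    (GM1 GA : ℝ → ℝ → ℝ)
    (hM1res : Nonresonant n a T (XM1 n T))
    (hGM1 : IsGreen n a T (XM1 n T) GM1)
    (hAres : Nonresonant n (tildeCoef T a) (2 * T) (XA n (2 * T)))
    (hGA : IsGreen n (tildeCoef T a) (2 * T) (XA n (2 * T)) GA) :
    ∀ t ∈ Icc 0 T, ∀ s ∈ Icc 0 T,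
      GM1 t s = GA t s - GA (2 * T - t) s := by
  have hT2 : T ≤ 2*T := by linarith
  have hJ : (0:ℝ) < 2*T := by linarith
  have sub12 : Icc (0:ℝ) T ⊆ Icc (0:ℝ) (2*T) := Icc_subset_Icc le_rfl hT2
  have hrefmem : ∀ x ∈ Icc (0:ℝ) (2*T), 2*T - x ∈ Icc (0:ℝ) (2*T) := by
    intro x hx
    simp only [mem_Icc] at hx ⊢
    constructor <;> linarith [hx.1, hx.2]
  have hGAt : ∀ t ∈ Icc (0:ℝ) (2*T), ContinuousOn (fun s => GA t s) (Icc 0 (2*T)) := by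
    intro t ht
    have h := hGA.1.comp (f := fun s : ℝ => ((t, s) : ℝ × ℝ))
      (continuous_const.prodMk continuous_id).continuousOn
      (fun s hs => Set.mk_mem_prod ht hs)
    exact h
  have hGM1t : ∀ t ∈ Icc (0:ℝ) T, ContinuousOn (fun s => GM1 t s) (Icc 0 T) := by
    intro t ht
    have h := hGM1.1.comp (f := fun s : ℝ => ((t, s) : ℝ × ℝ))
      (continuous_const.prodMk continuous_id).continuousOn
      (fun s hs => Set.mk_mem_prod ht hs)
    exact h
  -- Symmetry of the antiperiodic Green's function under the double reflection
  have hsym : ∀ t ∈ Icc (0:ℝ) (2*T), ∀ s ∈ Icc (0:ℝ) (2*T),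
      GA (2*T - t) s = GA t (2*T - s) := by
    intro t ht
    set F : ℝ → ℝ := fun s => GA (2*T - t) s - GA t (2*T - s) with hFdef
    have hFcont : ContinuousOn F (Icc 0 (2*T)) := by
      refine (hGAt _ (hrefmem t ht)).sub ?_
      exact (hGAt t ht).comp (continuous_const.sub continuous_id).continuousOn hrefmem
    have hFint : ∀ τ : ℝ → ℝ, IntervalIntegrable τ volume 0 (2*T) →
        (∫ s in (0:ℝ)..(2*T), F s * τ s) = 0 := by
      intro τ hτ
      obtain ⟨hmem, hsolve, _⟩ := hGA.2 τ hτ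
      obtain ⟨hmem2, hsolve2⟩ := reflect_XA n hn T hT a _ τ hmem hsolve
      have hτ' : IntervalIntegrable (fun s => τ (2*T - s)) volume 0 (2*T) := by
        have h := (hτ.comp_sub_left (2*T)).symm
        rw [sub_self, sub_zero] at h
        exact h
      obtain ⟨_, _, huniq⟩ := hGA.2 (fun s => τ (2*T - s)) hτ'
      have hval := huniq _ hmem2 hsolve2 t ht
      have hcv := intervalIntegral.integral_comp_sub_left (a := (0:ℝ)) (b := 2*T)
        (fun r => GA t (2*T - r) * τ r) (2*T)
      simp only [sub_sub_cancel, sub_self, sub_zero] at hcv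
      -- hcv : ∫ x in 0..2T, GA t (2T - (2T - x)) * τ (2T - x) = ∫ x in 0..2T, GA t (2T-x) * τ x
      have hI1 : IntervalIntegrable (fun s => GA (2*T - t) s * τ s) volume 0 (2*T) := by
        refine hτ.continuousOn_mul ?_
        rw [uIcc_of_le hJ.le]; exact hGAt _ (hrefmem t ht)
      have hI2 : IntervalIntegrable (fun s => GA t (2*T - s) * τ s) volume 0 (2*T) := by
        refine hτ.continuousOn_mul ?_
        rw [uIcc_of_le hJ.le]
        exact (hGAt t ht).comp (continuous_const.sub continuous_id).continuousOn hrefmem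
      have hsplit : (∫ s in (0:ℝ)..(2*T), F s * τ s)
          = (∫ s in (0:ℝ)..(2*T), GA (2*T - t) s * τ s)
            - ∫ s in (0:ℝ)..(2*T), GA t (2*T - s) * τ s := by
        rw [← intervalIntegral.integral_sub hI1 hI2]
        apply intervalIntegral.integral_congr
        intro x _
        simp only [hFdef]; ring
      rw [hsplit, ← hcv, ← hval]
      simp
    intro s hs
    have hII : IntervalIntegrable F volume 0 (2*T) := by
      apply ContinuousOn.intervalIntegrable; rwa [uIcc_of_le hJ.le]
    have h0 := eq_zero_of_integral_sq hJ hFcont (hFint F hII) s hs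
    simpa [hFdef, sub_eq_zero] using h0
  -- Main identity at the level of integrals
  have hmain : ∀ σ : ℝ → ℝ, IntervalIntegrable σ volume 0 T → ∀ t' ∈ Icc (0:ℝ) T,
      (∫ s in (0:ℝ)..T, GM1 t' s * σ s)
        = ∫ s in (0:ℝ)..T, (GA t' s - GA (2*T - t') s) * σ s := by
    intro σ hσ
    set σh : ℝ → ℝ := fun s => if s ≤ T then σ s else -σ (2*T - s) with hσhdef
    have hσh1 : IntervalIntegrable σh volume 0 T := by
      rw [intervalIntegrable_iff_integrableOn_Ioc_of_le hT.le] at hσ ⊢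
      exact hσ.congr_fun (fun x hx => by simp [hσhdef, if_pos hx.2]) measurableSet_Ioc
    have hσh2 : IntervalIntegrable σh volume T (2*T) := by
      have base : IntervalIntegrable (fun s => -σ (2*T - s)) volume T (2*T) := by
        have h := (hσ.comp_sub_left (2*T)).symm
        rw [sub_zero] at h
        have h2 : (2*T - T) = T := by ring
        rw [h2] at h
        exact h.neg
      rw [intervalIntegrable_iff_integrableOn_Ioc_of_le (by linarith)] at base ⊢
      exact base.congr_fun (fun x hx => by
        simp [hσhdef, if_neg (not_le.mpr hx.1)]) measurableSet_Ioc
    have hσhJ : IntervalIntegrable σh volume 0 (2*T) := hσh1.trans hσh2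
    obtain ⟨hvmem, hvsol, _⟩ := hGA.2 σh hσhJ
    set v : ℝ → ℝ := fun x => ∫ s in (0:ℝ)..(2*T), GA x s * σh s with hvdef
    obtain ⟨hw1, hw2⟩ := reflect_XA n hn T hT a v σh hvmem hvsol
    have hoddext : ∀ x : ℝ, x ≠ T → σh (2*T - x) = -σh x := by
      intro x hx
      by_cases h1 : x ≤ T
      · have h1' : x < T := lt_of_le_of_ne h1 hx
        have hng : ¬ (2*T - x ≤ T) := by intro hc; linarith
        simp [hσhdef, if_neg hng, if_pos h1, sub_sub_cancel]
      · have hle : 2*T - x ≤ T := by push_neg at h1; linarith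
        simp [hσhdef, if_pos hle, if_neg h1]
    have hw2' : ∀ᵐ x ∂volume, x ∈ Icc (0:ℝ) (2*T) →
        Lop n (tildeCoef T a) (fun y => v (2*T - y)) x = (fun s => -σh s) x := by
      have hae2 : ∀ᵐ (x:ℝ) ∂volume, x ∈ ({T} : Set ℝ)ᶜ :=
        compl_mem_ae_iff.mpr (measure_singleton T)
      filter_upwards [hw2, hae2] with x h1 h2 hx
      rw [h1 hx, hoddext x (by simpa using h2)]
    have hnegmem := neg_XA n (2*T) v hvmem
    have hnegsol : ∀ᵐ x ∂volume, x ∈ Icc (0:ℝ) (2*T) →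
        Lop n (tildeCoef T a) (fun y => -(v y)) x = (fun s => -σh s) x := by
      filter_upwards [hvsol] with x h1 hx
      rw [Lop_neg, h1 hx]
    obtain ⟨_, _, huniq⟩ := hGA.2 (fun s => -σh s) hσhJ.neg
    have hvv : ∀ x ∈ Icc (0:ℝ) (2*T), v (2*T - x) = -(v x) := by
      intro x hx
      have e1 := huniq _ hw1 hw2' x hx
      have e2 := huniq _ hnegmem hnegsol x hx
      exact e1.trans e2.symm
    have hDIcc : ∀ k, k < 2*n → ∀ x ∈ Icc (0:ℝ) (2*T),
        (-1:ℝ)^k * iteratedDeriv k v (2*T - x) = -(iteratedDeriv k v x) := by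
      intro k hk
      have hIoo : EqOn (iteratedDeriv k (fun y => v (2*T - y)))
          (iteratedDeriv k (fun y => -(v y))) (Ioo 0 (2*T)) := by
        intro x hx
        apply Filter.EventuallyEq.iteratedDeriv_eq
        filter_upwards [isOpen_Ioo.mem_nhds hx] with y hy
        exact hvv y (Ioo_subset_Icc_self hy)
      have hc1 : ContinuousOn (iteratedDeriv k (fun y => v (2*T - y))) (Icc 0 (2*T)) := by
        rw [iterD_reflect']
        refine continuousOn_const.mul ((hvmem.1.1 k hk).comp ?_ hrefmem)
        exact (continuous_const.sub continuous_id).continuousOn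
      have hc2 : ContinuousOn (iteratedDeriv k (fun y => -(v y))) (Icc 0 (2*T)) := by
        rw [iterD_neg']
        exact (hvmem.1.1 k hk).neg
      have hIcc := eqOn_Icc_of_eqOn_Ioo hJ hc1 hc2 hIoo
      intro x hx
      have h := hIcc hx
      rw [iterD_reflect, iterD_neg'] at h
      exact h
    have hvXM1 : v ∈ XM1 n T := by
      refine ⟨⟨?_, ?_, ?_⟩, ?_⟩
      · intro k hk; exact (hvmem.1.1 k hk).mono sub12
      · refine hvmem.1.2.1.mono_set ?_
        rw [uIcc_of_le hT.le, uIcc_of_le hJ.le]; exact sub12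
      · intro x hx; exact hvmem.1.2.2 x (sub12 hx)
      · intro k hk
        constructor
        · have h1 := hDIcc (2*k+1) (by omega) 0 ⟨le_rfl, hJ.le⟩
          have h2 := hvmem.2 (2*k+1) (by omega)
          have ho : (-1:ℝ)^(2*k+1) = -1 := Odd.neg_one_pow ⟨k, rfl⟩
          rw [ho, sub_zero] at h1
          linarith
        · have h1 := hDIcc (2*k) (by omega) T ⟨hT.le, hT2⟩
          have he : (-1:ℝ)^(2*k) = 1 := Even.neg_one_pow (even_two_mul k)
          have harg : 2*T - T = T := by ring
          rw [he, one_mul, harg] at h1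
          linarith
    have hvsolT : ∀ᵐ x ∂volume, x ∈ Icc (0:ℝ) T → Lop n a v x = σ x := by
      filter_upwards [hvsol] with x h1 hx
      have hx2 : x ∈ Icc (0:ℝ) (2*T) := sub12 hx
      have h := h1 hx2
      have hσeq : σh x = σ x := if_pos hx.2
      rw [← hσeq, ← h]
      simp only [Lop]
      congr 1
      refine Finset.sum_congr rfl fun k _ => ?_
      rw [show tildeCoef T a k x = a k x from if_pos hx.2]
    obtain ⟨_, _, hMuniq⟩ := hGM1.2 σ hσ
    intro t' ht'
    have hrep := hMuniq v hvXM1 hvsolT t' ht'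
    rw [← hrep]
    have ht'J : t' ∈ Icc (0:ℝ) (2*T) := sub12 ht'
    have hrt' : 2*T - t' ∈ Icc (0:ℝ) (2*T) := hrefmem t' ht'J
    have hint1 : IntervalIntegrable (fun s => GA t' s * σh s) volume 0 (2*T) := by
      refine hσhJ.continuousOn_mul ?_
      rw [uIcc_of_le hJ.le]; exact hGAt t' ht'J
    have hsplit := intervalIntegral.integral_add_adjacent_intervals
      (a := (0:ℝ)) (b := T) (c := 2*T)
      (hint1.mono_set (by rw [uIcc_of_le hT.le, uIcc_of_le hJ.le]; exact sub12))
      (hint1.mono_set (by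
        rw [uIcc_of_le hT2, uIcc_of_le hJ.le]; exact Icc_subset_Icc hT.le le_rfl))
    have e1 : (∫ s in (0:ℝ)..T, GA t' s * σh s) = ∫ s in (0:ℝ)..T, GA t' s * σ s := by
      apply intervalIntegral.integral_congr
      intro x hx
      rw [uIcc_of_le hT.le] at hx
      simp [hσhdef, if_pos hx.2]
    have e2 : (∫ s in T..(2*T), GA t' s * σh s)
        = -∫ s in T..(2*T), GA t' s * σ (2*T - s) := by
      rw [← intervalIntegral.integral_neg]
      refine intervalIntegral.integral_congr_ae (Filter.Eventually.of_forall fun x hx => ?_)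
      rw [uIoc_of_le hT2] at hx
      simp [hσhdef, if_neg (not_le.mpr hx.1), mul_neg]
    have e3 : (∫ s in T..(2*T), GA t' s * σ (2*T - s))
        = ∫ s in (0:ℝ)..T, GA t' (2*T - s) * σ s := by
      have hcv := intervalIntegral.integral_comp_sub_left (a := (0:ℝ)) (b := T)
        (fun s => GA t' s * σ (2*T - s)) (2*T)
      simp only [sub_sub_cancel, sub_zero] at hcv
      have h2 : (2*T - T) = T := by ring
      rw [h2] at hcv
      exact hcv.symm
    have e4 : (∫ s in (0:ℝ)..T, GA t' (2*T - s) * σ s)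
        = ∫ s in (0:ℝ)..T, GA (2*T - t') s * σ s := by
      apply intervalIntegral.integral_congr
      intro x hx
      rw [uIcc_of_le hT.le] at hx
      show GA t' (2*T - x) * σ x = GA (2*T - t') x * σ x
      rw [← hsym t' ht'J x (sub12 hx)]
    have hI1 : IntervalIntegrable (fun s => GA t' s * σ s) volume 0 T := by
      refine hσ.continuousOn_mul ?_
      rw [uIcc_of_le hT.le]; exact (hGAt t' ht'J).mono sub12
    have hI2 : IntervalIntegrable (fun s => GA (2*T - t') s * σ s) volume 0 T := by
      refine hσ.continuousOn_mul ?_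
      rw [uIcc_of_le hT.le]; exact (hGAt _ hrt').mono sub12
    have hfin : (∫ s in (0:ℝ)..T, (GA t' s - GA (2*T - t') s) * σ s)
        = (∫ s in (0:ℝ)..T, GA t' s * σ s) - ∫ s in (0:ℝ)..T, GA (2*T - t') s * σ s := by
      rw [← intervalIntegral.integral_sub hI1 hI2]
      apply intervalIntegral.integral_congr
      intro x _
      ring
    have hvval : v t' = (∫ s in (0:ℝ)..T, GA t' s * σh s)
        + ∫ s in T..(2*T), GA t' s * σh s := hsplit.symm
    rw [hvval, e1, e2, e3, e4, hfin]
    ring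
  -- Conclusion: pointwise identity of the kernels
  intro t ht s hs
  set F : ℝ → ℝ := fun s => GM1 t s - (GA t s - GA (2*T - t) s) with hFdef
  have htJ : t ∈ Icc (0:ℝ) (2*T) := sub12 ht
  have hrt : 2*T - t ∈ Icc (0:ℝ) (2*T) := hrefmem t htJ
  have hFcont : ContinuousOn F (Icc 0 T) := by
    refine (hGM1t t ht).sub (((hGAt t htJ).mono sub12).sub ((hGAt _ hrt).mono sub12))
  have hFII : IntervalIntegrable F volume 0 T := by
    apply ContinuousOn.intervalIntegrable; rwa [uIcc_of_le hT.le]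
  have h1 := hmain F hFII t ht
  have hI1 : IntervalIntegrable (fun x => GM1 t x * F x) volume 0 T := by
    refine hFII.continuousOn_mul ?_
    rw [uIcc_of_le hT.le]; exact hGM1t t ht
  have hI2 : IntervalIntegrable (fun x => (GA t x - GA (2*T - t) x) * F x) volume 0 T := by
    refine hFII.continuousOn_mul ?_
    rw [uIcc_of_le hT.le]
    exact ((hGAt t htJ).mono sub12).sub ((hGAt _ hrt).mono sub12)
  have hzero : (∫ x in (0:ℝ)..T, F x * F x) = 0 := by
    have hdiff : (∫ x in (0:ℝ)..T, F x * F x)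
        = (∫ x in (0:ℝ)..T, GM1 t x * F x)
          - ∫ x in (0:ℝ)..T, (GA t x - GA (2*T - t) x) * F x := by
      rw [← intervalIntegral.integral_sub hI1 hI2]
      apply intervalIntegral.integral_congr
      intro x _
      simp only [hFdef]
      ring
    rw [hdiff, h1, sub_self]
  have hfin := eq_zero_of_integral_sq hT hFcont hzero s hs
  simp only [hFdef] at hfin
  linarith
end
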